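/- arXiv:2410.07715 — 5 statements merged into one kernel-verified Lean document; each statement's English description precedes it below -/
import Mathlib

section
/- Let r < 3/2 and let w be the solution of the Cauchy problem w'' + (y/2)·w' + (r − 1/2)·w = 0 for y > 0, with w(0) = 0 and w'(0) = 1. Then: w(y) > 0 for all y > 0; w'(y)/w(y) → 0 as y → +∞; and there exists a constant C > 0 such that w(y)/y^k → C as y → +∞, where k = 1 − 2r. -/
open Real Filter

noncomputable section

/-- `w` solves the Cauchy problem `w'' + (y/2) w' + (r - 1/2) w = 0` on `(0,∞)`,
with `w(0) = 0` and `w'(0) = 1`. -/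
def SolvesLinODE (w : ℝ → ℝ) (r : ℝ) : Prop :=
  (∀ y : ℝ, DifferentiableAt ℝ w y ∧ DifferentiableAt ℝ (deriv w) y) ∧
  (∀ y : ℝ, 0 < y →
    deriv (deriv w) y + (y / 2) * deriv w y + (r - 1 / 2) * w y = 0) ∧
  w 0 = 0 ∧ deriv w 0 = 1

/-!
Write `k = 1 - 2r`, so that the equation is `w'' = (k/2) w - (y/2) w'` and `r < 3/2` means
`k > -2`. The energy `E = y w' - (1 - y²/2) w` has `E(0) = 0` and `E' = (k+2)/2 · y w`, so it
stays positive as long as `w` does; at a first zero `y₀` of `w` this would give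
`w'(y₀) = E(y₀)/y₀ > 0`, which is impossible. Hence `w > 0`.

Then `v = (log (w / y^k))' = w'/w - k/y` solves the Riccati equation
`v' = k(1-k)/y² - (y/2 + 2k/y + v) v`, in which the damping `-(y/2) v` wins for large `y`:
`c/y³ + K e^{-y²/16}` is a barrier for `v` and for `-v`. The lower barrier needs one large `y`
with `v(y) ≥ -y/3`; otherwise `w` would decay like `e^{-y²/8}`, whereas then `E ≤ y² w / 2`
stays above `E(1) > 0`. So `v` is integrable at infinity and tends to `0`: `log (w / y^k)`
converges, and `w'/w = v + k/y → 0`.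
-/

open Set Topology MeasureTheory

theorem image_le_of_deriv_lt_deriv_boundary_Ici {f f' B B' : ℝ → ℝ} {a : ℝ}
    (hf : ∀ x ≥ a, HasDerivAt f (f' x) x) (hB : ∀ x ≥ a, HasDerivAt B (B' x) x)
    (ha : f a ≤ B a) (bound : ∀ x ≥ a, f x = B x → f' x < B' x) :
    ∀ x ≥ a, f x ≤ B x := fun _ hx =>
  image_le_of_deriv_right_lt_deriv_boundary'
    (fun y hy => (hf y hy.1).continuousAt.continuousWithinAt)
    (fun y hy => (hf y hy.1).hasDerivWithinAt) ha
    (fun y hy => (hB y hy.1).continuousAt.continuousWithinAt)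
    (fun y hy => (hB y hy.1).hasDerivWithinAt) (fun y hy => bound y hy.1) ⟨hx, le_rfl⟩

theorem exists_first_zero {f : ℝ → ℝ} {a b : ℝ} (hf : ContinuousOn f (Icc a b))
    (ha : 0 < f a) (hb : f b ≤ 0) (hab : a ≤ b) :
    ∃ c ∈ Ioc a b, f c = 0 ∧ ∀ y ∈ Ico a c, 0 < f y := by
  set S := Icc a b ∩ f ⁻¹' Iic 0
  have hS : IsClosed S := hf.preimage_isClosed_of_isClosed isClosed_Icc isClosed_Iic
  have hbdd : BddBelow S := ⟨a, fun y hy => hy.1.1⟩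
  have hcS : sInf S ∈ S := hS.csInf_mem ⟨b, ⟨hab, le_rfl⟩, hb⟩ hbdd
  have hbefore : ∀ y ∈ Ico a (sInf S), 0 < f y := fun y hy => by
    by_contra! h
    exact hy.2.not_ge (csInf_le hbdd ⟨⟨hy.1, hy.2.le.trans hcS.1.2⟩, h⟩)
  have hac : a < sInf S := hcS.1.1.lt_of_ne fun h => (h ▸ hcS.2 : f a ≤ 0).not_gt ha
  refine ⟨sInf S, ⟨hac, hcS.1.2⟩, le_antisymm hcS.2 ?_, hbefore⟩
  have hcont : ContinuousWithinAt f (Ico a (sInf S)) (sInf S) :=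
    (hf _ ⟨hcS.1.1, hcS.1.2⟩).mono (Ico_subset_Icc_self.trans (Icc_subset_Icc_right hcS.1.2))
  have : (𝓝[Ico a (sInf S)] sInf S).NeBot := right_nhdsWithin_Ico_neBot hac
  exact ge_of_tendsto hcont (eventually_nhdsWithin_of_forall fun y hy => (hbefore y hy).le)

theorem tendsto_sq_mul_exp_sub (A : ℝ) :
    Tendsto (fun y => y ^ 2 / 2 * exp (A - y ^ 2 / 8)) atTop (𝓝 0) := by
  have := ((tendsto_pow_mul_exp_neg_atTop_nhds_zero 1).comp
    ((tendsto_pow_atTop two_ne_zero).atTop_div_const (by norm_num : (0 : ℝ) < 8))).const_mul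
    (4 * exp A)
  rw [mul_zero] at this
  refine this.congr fun y => ?_
  simp only [Function.comp, pow_one, sub_eq_add_neg, exp_add]
  ring

def riccatiBarrier (c K y : ℝ) : ℝ := c / y ^ 3 + K * exp (-(y ^ 2 / 16))

theorem hasDerivAt_riccatiBarrier (c K : ℝ) {y : ℝ} (hy : y ≠ 0) :
    HasDerivAt (riccatiBarrier c K)
      (-(3 * c / y ^ 4) - y / 8 * (K * exp (-(y ^ 2 / 16)))) y := by
  have := (((hasDerivAt_pow 3 y).inv (pow_ne_zero 3 hy)).const_mul c).add
    (((hasDerivAt_pow 2 y).div_const 16).neg.exp.const_mul K)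
  refine (this.congr_deriv ?_).congr_of_eventuallyEq
    (Eventually.of_forall fun x => by simp [riccatiBarrier, div_eq_mul_inv])
  simp only [Pi.neg_apply]
  field_simp
  ring

theorem riccati_estimates {k c x : ℝ} (hc : 16 * |k * (1 - k)| ≤ c) (hc₀ : 0 < c)
    (hx : 96 * |k| + 48 * c + 48 ≤ x) :
    |k * (1 - k) / x ^ 2| ≤ x / 16 * (c / x ^ 3) ∧ |2 * k / x| ≤ x / 48 ∧
      c / x ^ 3 ≤ x / 48 ∧ 3 * c / x ^ 4 < x / 16 * (c / x ^ 3) := by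
  have hx₀ : 0 < x := by linarith [abs_nonneg k]
  have hx₁ : 48 ≤ x := by linarith [abs_nonneg k]
  have hx₂ : x ≤ x ^ 2 := by nlinarith
  have hx₄ : x ≤ x ^ 4 := by nlinarith [pow_le_pow_left₀ hx₀.le hx₂ 2]
  refine ⟨?_, ?_, ?_, ?_⟩
  · rw [abs_div, abs_of_pos (by positivity : (0 : ℝ) < x ^ 2), div_le_iff₀ (by positivity)]
    field_simp
    nlinarith
  · rw [abs_div, abs_of_pos hx₀, div_le_iff₀ hx₀, abs_mul]
    nlinarith [abs_nonneg k]
  · rw [div_le_iff₀ (by positivity)]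
    linarith [show x / 48 * x ^ 3 = x ^ 4 / 48 by ring, abs_nonneg k]
  · rw [div_lt_iff₀ (by positivity)]
    field_simp
    nlinarith

theorem tendsto_riccatiBarrier (c K : ℝ) : Tendsto (riccatiBarrier c K) atTop (𝓝 0) := by
  have h₁ : Tendsto (fun y : ℝ => c / y ^ 3) atTop (𝓝 0) :=
    tendsto_const_nhds.div_atTop (tendsto_pow_atTop three_ne_zero)
  have h₂ : Tendsto (fun y : ℝ => K * exp (-(y ^ 2 / 16))) atTop (𝓝 0) := by
    simpa using (tendsto_exp_atBot.comp (tendsto_neg_atTop_atBot.comp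
      ((tendsto_pow_atTop two_ne_zero).atTop_div_const (by norm_num : (0 : ℝ) < 16)))).const_mul K
  have := h₁.add h₂
  rw [add_zero] at this
  exact this

theorem integrableOn_riccatiBarrier (c K : ℝ) {y₀ : ℝ} (hy₀ : 0 < y₀) :
    IntegrableOn (riccatiBarrier c K) (Ioi y₀) := by
  have h₁ : IntegrableOn (fun y : ℝ => c / y ^ 3) (Ioi y₀) := by
    refine IntegrableOn.congr_fun
      ((integrableOn_Ioi_rpow_of_lt (by norm_num : (-3 : ℝ) < -1) hy₀).const_mul c)
      (fun y hy => ?_) measurableSet_Ioi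
    rw [rpow_neg (hy₀.trans hy).le, show (3 : ℝ) = (3 : ℕ) by norm_num, rpow_natCast,
      div_eq_mul_inv]
  have h₂ : IntegrableOn (fun y : ℝ => K * exp (-(y ^ 2 / 16))) (Ioi y₀) := by
    refine IntegrableOn.congr_fun
      ((integrable_exp_neg_mul_sq (by norm_num : (0 : ℝ) < 1 / 16)).const_mul K).integrableOn
      (fun y _ => ?_) measurableSet_Ioi
    ring_nf
  exact h₁.add h₂

def SolvesOnIoi (w : ℝ → ℝ) (k : ℝ) : Prop :=
  ∀ y > 0, HasDerivAt w (deriv w y) y ∧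
    HasDerivAt (deriv w) (k / 2 * w y - y / 2 * deriv w y) y

def energy (w : ℝ → ℝ) (y : ℝ) : ℝ := y * deriv w y - (1 - y ^ 2 / 2) * w y

def relLogDeriv (w : ℝ → ℝ) (k y : ℝ) : ℝ := deriv w y / w y - k / y

theorem tendsto_logDeriv_of_abs_relLogDeriv_le {w : ℝ → ℝ} {k c K y₀ : ℝ}
    (hb : ∀ y ≥ y₀, |relLogDeriv w k y| ≤ riccatiBarrier c K y) :
    Tendsto (fun y => deriv w y / w y) atTop (𝓝 0) := by
  have hv : Tendsto (relLogDeriv w k) atTop (𝓝 0) :=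
    squeeze_zero_norm' (eventually_atTop.2 ⟨y₀, hb⟩) (tendsto_riccatiBarrier c K)
  have := hv.add (tendsto_const_nhds.div_atTop tendsto_id : Tendsto (fun y => k / y) atTop (𝓝 0))
  rw [add_zero] at this
  exact this.congr fun y => by simp [relLogDeriv]

namespace SolvesLinODE

variable {w : ℝ → ℝ} {r : ℝ}

theorem solvesOnIoi (hw : SolvesLinODE w r) : SolvesOnIoi w (1 - 2 * r) := fun y hy => by
  refine ⟨(hw.1 y).1.hasDerivAt, ?_⟩
  refine (hw.1 y).2.hasDerivAt.congr_deriv ?_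
  linarith [hw.2.1 y hy]

theorem continuous_energy (hw : SolvesLinODE w r) : Continuous (energy w) := by
  have hw₀ : Continuous w := continuous_iff_continuousAt.2 fun y => (hw.1 y).1.continuousAt
  have hw₁ : Continuous (deriv w) :=
    continuous_iff_continuousAt.2 fun y => (hw.1 y).2.continuousAt
  unfold energy
  fun_prop

end SolvesLinODE

namespace SolvesOnIoi

variable {w : ℝ → ℝ} {k : ℝ}

theorem hasDerivAt_energy (hsol : SolvesOnIoi w k) {y : ℝ} (hy : 0 < y) :
    HasDerivAt (energy w) ((k + 2) / 2 * (y * w y)) y := by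
  obtain ⟨h₀, h₁⟩ := hsol y hy
  have := ((hasDerivAt_id' y).mul h₁).sub
    (((hasDerivAt_const y (1 : ℝ)).sub ((hasDerivAt_pow 2 y).div_const 2)).mul h₀)
  exact this.congr_deriv (by simp only [Pi.sub_apply]; ring)

theorem energy_pos (hsol : SolvesOnIoi w k) (hk : -2 < k) (hcont : ContinuousAt (energy w) 0)
    (h₀ : w 0 = 0) {b : ℝ} (hb : 0 < b) (hpos : ∀ y ∈ Ioo 0 b, 0 < w y) :
    0 < energy w b := by
  have hmono : StrictMonoOn (energy w) (Icc 0 b) := by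
    refine strictMonoOn_of_deriv_pos (convex_Icc 0 b) (fun y hy => ?_) fun y hy => ?_
    · rcases hy.1.eq_or_lt with rfl | hy₀
      · exact hcont.continuousWithinAt
      · exact (hsol.hasDerivAt_energy hy₀).continuousAt.continuousWithinAt
    · rw [interior_Icc] at hy
      rw [(hsol.hasDerivAt_energy hy.1).deriv]
      exact mul_pos (by linarith) (mul_pos hy.1 (hpos y hy))
  simpa [energy, h₀] using hmono (left_mem_Icc.2 hb.le) (right_mem_Icc.2 hb.le) hb

theorem energy_le_energy (hsol : SolvesOnIoi w k) (hk : -2 < k) (hpos : ∀ y > 0, 0 < w y)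
    {a : ℝ} (ha : 0 < a) : ∀ y ≥ a, energy w a ≤ energy w y := fun y hy =>
  neg_le_neg_iff.1 <| image_le_of_deriv_lt_deriv_boundary_Ici
    (fun x hx => (hsol.hasDerivAt_energy (ha.trans_le hx)).neg)
    (fun _ _ => hasDerivAt_const _ _) le_rfl
    (fun x hx _ => neg_neg_of_pos
      (mul_pos (by linarith) (mul_pos (ha.trans_le hx) (hpos x (ha.trans_le hx))))) y hy

theorem pos (hsol : SolvesOnIoi w k) (hk : -2 < k) (hcont : ContinuousAt (energy w) 0)
    (h₀ : w 0 = 0) (h₁ : HasDerivAt w 1 0) : ∀ y > 0, 0 < w y := by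
  obtain ⟨ε, hε, hε'⟩ : ∃ ε > 0, ∀ y ∈ Ioc 0 ε, 0 < w y := by
    have := (hasDerivAt_iff_tendsto_slope.1 h₁).eventually (eventually_gt_nhds one_pos)
    obtain ⟨ε, hε, hsub⟩ := mem_nhdsGT_iff_exists_Ioc_subset.1
      (this.filter_mono (nhdsWithin_mono _ fun _ hy => ne_of_gt hy))
    refine ⟨ε, hε, fun y hy => ?_⟩
    have := hsub hy
    simp only [slope_def_field, h₀, sub_zero] at this
    exact (div_pos_iff_of_pos_right hy.1).1 this
  by_contra! ⟨b, hb, hwb⟩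
  have hεb : ε < b := lt_of_not_ge fun h => (hε' b ⟨hb, h⟩).not_ge hwb
  obtain ⟨c, ⟨hεc, -⟩, hc, hbefore⟩ := exists_first_zero
    (fun y hy => (hsol y (hε.trans_le hy.1)).1.continuousAt.continuousWithinAt)
    (hε' ε ⟨hε, le_rfl⟩) hwb hεb.le
  have hc₀ : 0 < c := hε.trans hεc
  have hpos : ∀ y ∈ Ioo 0 c, 0 < w y := fun y hy =>
    (le_or_gt y ε).elim (fun h => hε' y ⟨hy.1, h⟩) fun h => hbefore y ⟨h.le, hy.2⟩
  have hderiv : 0 < deriv w c := by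
    have := hsol.energy_pos hk hcont h₀ hc₀ hpos
    simp only [energy, hc, mul_zero, sub_zero] at this
    exact pos_of_mul_pos_right this hc₀.le
  -- a positive derivative at the zero `c` forces `w < 0` just to the left of `c`
  have hslope := ((hasDerivAt_iff_tendsto_slope.1 (hsol c hc₀).1).eventually
    (eventually_gt_nhds hderiv)).filter_mono
      (nhdsWithin_mono c (fun _ hy => ne_of_lt hy : Iio c ⊆ {c}ᶜ))
  obtain ⟨y, hy, hyc⟩ := (hslope.and (Ioo_mem_nhdsLT hεc)).exists
  rw [slope_def_field, hc, sub_zero] at hy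
  exact (div_pos_iff.1 hy).elim (fun h => h.2.not_gt (sub_neg.2 hyc.2))
    fun h => h.1.not_gt (hbefore y ⟨hyc.1.le, hyc.2⟩)

theorem hasDerivAt_relLogDeriv (hsol : SolvesOnIoi w k) (hpos : ∀ y > 0, 0 < w y) {y : ℝ}
    (hy : 0 < y) :
    HasDerivAt (relLogDeriv w k)
      (k * (1 - k) / y ^ 2 - (y / 2 + 2 * k / y + relLogDeriv w k y) * relLogDeriv w k y) y := by
  obtain ⟨h₀, h₁⟩ := hsol y hy
  have hw := (hpos y hy).ne'
  have := (h₁.div h₀ hw).sub ((hasDerivAt_inv hy.ne').const_mul k)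
  refine (this.congr_deriv ?_).congr_of_eventuallyEq
    (Eventually.of_forall fun x => by simp [relLogDeriv, div_eq_mul_inv])
  simp only [relLogDeriv]
  field_simp
  ring

theorem hasDerivAt_log_sub (hsol : SolvesOnIoi w k) (hpos : ∀ y > 0, 0 < w y) {y : ℝ}
    (hy : 0 < y) : HasDerivAt (fun x => log (w x) - k * log x) (relLogDeriv w k y) y := by
  have := ((hsol y hy).1.log (hpos y hy).ne').sub ((hasDerivAt_log hy.ne').const_mul k)
  exact this.congr_deriv (by rw [relLogDeriv, div_eq_mul_inv k])

theorem frequently_neg_le_logDeriv (hsol : SolvesOnIoi w k) (hk : -2 < k)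
    (hpos : ∀ y > 0, 0 < w y) (hE : 0 < energy w 1) :
    ∃ᶠ y in atTop, -(y / 4) ≤ deriv w y / w y := by
  by_contra h
  obtain ⟨Y, hY⟩ := eventually_atTop.1 (not_frequently.1 h)
  simp only [not_le] at hY
  set Y₁ := max Y 1
  have hY₁ : 1 ≤ Y₁ := le_max_right _ _
  set A := log (w Y₁) + Y₁ ^ 2 / 8
  have hlog : ∀ y ≥ Y₁, log (w y) + y ^ 2 / 8 ≤ A :=
    image_le_of_deriv_lt_deriv_boundary_Ici (f' := fun y => deriv w y / w y + y / 4)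
      (fun x hx => (((hsol x (by linarith)).1.log (hpos x (by linarith)).ne').add
        ((hasDerivAt_pow 2 x).div_const 8)).congr_deriv (by push_cast; ring))
      (fun _ _ => hasDerivAt_const _ _) le_rfl
      fun x hx _ => by linarith [hY x ((le_max_left _ _).trans hx)]
  have hbound : ∀ y ≥ Y₁, energy w 1 ≤ y ^ 2 / 2 * exp (A - y ^ 2 / 8) := by
    intro y hy
    have hy₀ : 0 < y := by linarith
    have hw := hpos y hy₀
    have hdw : deriv w y < 0 := by
      have := (hY y ((le_max_left _ _).trans hy)).trans (by linarith : -(y / 4) < 0)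
      exact (div_neg_iff.1 this).elim (fun h => absurd h.2 hw.not_gt) fun h => h.1
    have hwexp : w y ≤ exp (A - y ^ 2 / 8) := by
      rw [← exp_log hw]
      exact exp_le_exp.2 (by linarith [hlog y hy])
    calc energy w 1 ≤ energy w y := hsol.energy_le_energy hk hpos one_pos y (by linarith)
      _ ≤ y ^ 2 / 2 * w y := by unfold energy; nlinarith
      _ ≤ y ^ 2 / 2 * exp (A - y ^ 2 / 8) := by gcongr
  obtain ⟨y, hy, hyY⟩ := (((tendsto_sq_mul_exp_sub A).eventually (gt_mem_nhds hE)).and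
    (eventually_ge_atTop Y₁)).exists
  linarith [hbound y hyY]

theorem relLogDeriv_le_riccatiBarrier (hsol : SolvesOnIoi w k) (hpos : ∀ y > 0, 0 < w y)
    {c K y₀ : ℝ} (hc : 16 * |k * (1 - k)| ≤ c) (hc₀ : 0 < c) (hK : 0 ≤ K)
    (hy₀ : 96 * |k| + 48 * c + 48 ≤ y₀)
    (h₀ : relLogDeriv w k y₀ ≤ riccatiBarrier c K y₀) :
    ∀ y ≥ y₀, relLogDeriv w k y ≤ riccatiBarrier c K y := by
  have hy₀' : 0 < y₀ := by linarith [abs_nonneg k]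
  refine image_le_of_deriv_lt_deriv_boundary_Ici
    (fun x hx => hsol.hasDerivAt_relLogDeriv hpos (hy₀'.trans_le hx))
    (fun x hx => hasDerivAt_riccatiBarrier c K (hy₀'.trans_le hx).ne') h₀ fun x hx hvx => ?_
  obtain ⟨hκ, hk', -, hc'⟩ := riccati_estimates hc hc₀ (hy₀.trans hx)
  have hx₀ : 0 < x := hy₀'.trans_le hx
  have hp : 0 < c / x ^ 3 := by positivity
  have he : 0 ≤ K * exp (-(x ^ 2 / 16)) := by positivity
  have hxe : 0 ≤ x * (K * exp (-(x ^ 2 / 16))) := by positivity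
  rw [hvx, riccatiBarrier]
  have : 3 * x / 8 * (c / x ^ 3 + K * exp (-(x ^ 2 / 16))) ≤
      (x / 2 + 2 * k / x + (c / x ^ 3 + K * exp (-(x ^ 2 / 16)))) *
        (c / x ^ 3 + K * exp (-(x ^ 2 / 16))) :=
    mul_le_mul_of_nonneg_right (by linarith [abs_le.1 hk']) (by positivity)
  linarith [abs_le.1 hκ]

theorem neg_relLogDeriv_le_riccatiBarrier (hsol : SolvesOnIoi w k) (hpos : ∀ y > 0, 0 < w y)
    {c K y₀ : ℝ} (hc : 16 * |k * (1 - k)| ≤ c) (hc₀ : 0 < c) (hK : 0 ≤ K)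
    (hy₀ : 96 * |k| + 48 * c + 48 ≤ y₀) (hKy₀ : K * exp (-(y₀ ^ 2 / 16)) ≤ y₀ / 3)
    (h₀ : -relLogDeriv w k y₀ ≤ riccatiBarrier c K y₀) :
    ∀ y ≥ y₀, -relLogDeriv w k y ≤ riccatiBarrier c K y := by
  have hy₀' : 0 < y₀ := by linarith [abs_nonneg k]
  refine image_le_of_deriv_lt_deriv_boundary_Ici
    (fun x hx => (hsol.hasDerivAt_relLogDeriv hpos (hy₀'.trans_le hx)).neg)
    (fun x hx => hasDerivAt_riccatiBarrier c K (hy₀'.trans_le hx).ne') h₀ fun x hx hvx => ?_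
  obtain ⟨hκ, hk', hp', hc'⟩ := riccati_estimates hc hc₀ (hy₀.trans hx)
  have hx₀ : 0 < x := hy₀'.trans_le hx
  have he : 0 ≤ K * exp (-(x ^ 2 / 16)) := by positivity
  have hxe : 0 ≤ x * (K * exp (-(x ^ 2 / 16))) := by positivity
  have he' : K * exp (-(x ^ 2 / 16)) ≤ x / 3 := by
    have : -(x ^ 2 / 16) ≤ -(y₀ ^ 2 / 16) := by nlinarith
    linarith [mul_le_mul_of_nonneg_left (exp_le_exp.2 this) hK]
  rw [neg_eq_iff_eq_neg.1 hvx, riccatiBarrier]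
  have : x / 8 * (c / x ^ 3 + K * exp (-(x ^ 2 / 16))) ≤
      (x / 2 + 2 * k / x - (c / x ^ 3 + K * exp (-(x ^ 2 / 16)))) *
        (c / x ^ 3 + K * exp (-(x ^ 2 / 16))) :=
    mul_le_mul_of_nonneg_right (by linarith [abs_le.1 hk']) (by positivity)
  linarith [abs_le.1 hκ]

theorem exists_abs_relLogDeriv_le (hsol : SolvesOnIoi w k) (hk : -2 < k)
    (hpos : ∀ y > 0, 0 < w y) (hE : 0 < energy w 1) :
    ∃ c K y₀, 0 < y₀ ∧ ∀ y ≥ y₀, |relLogDeriv w k y| ≤ riccatiBarrier c K y := by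
  set c := 16 * |k * (1 - k)| + 1
  have hc₀ : 0 < c := by positivity
  obtain ⟨y₀, hy₀, hu₀⟩ :=
    (hsol.frequently_neg_le_logDeriv hk hpos hE).forall_exists_of_atTop (96 * |k| + 48 * c + 48)
  have hy₀' : 0 < y₀ := by linarith [abs_nonneg k]
  have hexp : exp (y₀ ^ 2 / 16) * exp (-(y₀ ^ 2 / 16)) = 1 := by rw [← exp_add]; simp
  have hp₀ : 0 ≤ c / y₀ ^ 3 := by positivity
  set K₁ := |relLogDeriv w k y₀| * exp (y₀ ^ 2 / 16)
  set K₂ := y₀ / 3 * exp (y₀ ^ 2 / 16)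
  have hK₁ : K₁ * exp (-(y₀ ^ 2 / 16)) = |relLogDeriv w k y₀| := by
    rw [mul_assoc, hexp, mul_one]
  have hK₂ : K₂ * exp (-(y₀ ^ 2 / 16)) = y₀ / 3 := by rw [mul_assoc, hexp, mul_one]
  have hup := hsol.relLogDeriv_le_riccatiBarrier (c := c) (K := K₁) hpos
    (le_add_of_nonneg_right zero_le_one) hc₀ (by positivity) hy₀
    (by rw [riccatiBarrier, hK₁]; linarith [le_abs_self (relLogDeriv w k y₀)])
  have hlow := hsol.neg_relLogDeriv_le_riccatiBarrier (c := c) (K := K₂) hpos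
    (le_add_of_nonneg_right zero_le_one) hc₀ (by positivity) hy₀ hK₂.le (by
      obtain ⟨-, hk', -, -⟩ :=
        riccati_estimates (le_add_of_nonneg_right zero_le_one) hc₀ hy₀
      rw [riccatiBarrier, hK₂, relLogDeriv]
      linarith [abs_le.1 hk', show 2 * k / y₀ = 2 * (k / y₀) by ring])
  refine ⟨c, K₁ + K₂, y₀, hy₀', fun y hy => ?_⟩
  have h₁ := hup y hy
  have h₂ := hlow y hy
  have : 0 ≤ K₁ * exp (-(y ^ 2 / 16)) := by positivity
  have : 0 ≤ K₂ * exp (-(y ^ 2 / 16)) := by positivity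
  rw [riccatiBarrier] at h₁ h₂ ⊢
  exact abs_le.2 ⟨by linarith, by linarith⟩

theorem exists_tendsto_div_rpow (hsol : SolvesOnIoi w k)
    (hpos : ∀ y > 0, 0 < w y) {c K y₀ : ℝ} (hy₀ : 0 < y₀)
    (hb : ∀ y ≥ y₀, |relLogDeriv w k y| ≤ riccatiBarrier c K y) :
    ∃ C > 0, Tendsto (fun y => w y / y ^ k) atTop (𝓝 C) := by
  have hderiv : ∀ y ∈ Ioi y₀,
      HasDerivAt (fun x => log (w x) - k * log x) (relLogDeriv w k y) y :=
    fun y hy => hsol.hasDerivAt_log_sub hpos (hy₀.trans hy)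
  have hint : IntegrableOn (relLogDeriv w k) (Ioi y₀) :=
    (integrableOn_riccatiBarrier c K hy₀).mono'
      (ContinuousOn.aestronglyMeasurable (fun y hy => (hsol.hasDerivAt_relLogDeriv hpos
        (hy₀.trans hy)).continuousAt.continuousWithinAt) measurableSet_Ioi)
      ((ae_restrict_iff' measurableSet_Ioi).2 (ae_of_all _ fun y hy => hb y (le_of_lt hy)))
  refine ⟨_, exp_pos _, ((continuous_exp.tendsto _).comp
    (tendsto_limUnder_of_hasDerivAt_of_integrableOn_Ioi hderiv hint)).congr' ?_⟩
  filter_upwards [eventually_gt_atTop 0] with y hy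
  simp only [Function.comp, exp_sub, exp_log (hpos y hy), rpow_def_of_pos hy]
  ring_nf

end SolvesOnIoi

/-- Lemma 2.2 (ii): when `r < 3/2`, `w > 0` on `(0,∞)`, `w'/w → 0` at `+∞`, and
`w(y) ∼ C y^k` as `y → +∞` with `k = 1 - 2r`. -/
theorem ode_w_subcritical (r : ℝ) (hr : r < 3 / 2)
    (w : ℝ → ℝ) (hw : SolvesLinODE w r) :
    (∀ y : ℝ, 0 < y → 0 < w y) ∧
    Filter.Tendsto (fun y => deriv w y / w y) Filter.atTop (nhds 0) ∧
    ∃ C : ℝ, 0 < C ∧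
      Filter.Tendsto (fun y => w y / y ^ (1 - 2 * r)) Filter.atTop (nhds C) := by
  have hsol := hw.solvesOnIoi
  have hk : -2 < 1 - 2 * r := by linarith
  have hE := hw.continuous_energy.continuousAt (x := 0)
  have h₁ : HasDerivAt w 1 0 := hw.2.2.2 ▸ (hw.1 0).1.hasDerivAt
  have hpos := hsol.pos hk hE hw.2.2.1 h₁
  have hE₁ := hsol.energy_pos hk hE hw.2.2.1 one_pos fun y hy => hpos y hy.1
  obtain ⟨c, K, y₀, hy₀, hb⟩ := hsol.exists_abs_relLogDeriv_le hk hpos hE₁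
  exact ⟨hpos, tendsto_logDeriv_of_abs_relLogDeriv_le hb,
    hsol.exists_tendsto_div_rpow hpos hy₀ hb⟩
end
end

section
/- Let u₀ satisfy Assumption 1.1 with exponent k > 1, and define v(t,x) := e^t · ∫_ℝ G(t, x−y) u₀(y) dy, where G(t,x) = (4πt)^{−1/2} e^{−x²/(4t)} is the one-dimensional heat kernel, so that v solves ∂ₜv = ∂ₓₓv + v with v(0,·) = u₀. Let c > 0 and t₀ > 0 be given. Then there exists c₀ > 0 such that v(t, 2t + c·√t) ≤ c₀ · t^{k/2} · e^{−c·√t} for all t ≥ t₀. -/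
open Real Filter MeasureTheory Set

noncomputable section

/-- Assumption 1.1: `u₀ : ℝ → [0,1]` is uniformly continuous and positive,
`liminf_{x → -∞} u₀(x) > 0`, and `a x^k e^{-x} ≤ u₀(x) ≤ A x^k e^{-x}` for `x > 1`. -/
def KPPInitialData (u₀ : ℝ → ℝ) (k : ℝ) : Prop :=
  UniformContinuous u₀ ∧
  (∀ x : ℝ, 0 < u₀ x ∧ u₀ x ≤ 1) ∧
  0 < Filter.liminf u₀ Filter.atBot ∧
  ∃ a A : ℝ, 0 < a ∧ a ≤ A ∧
    ∀ x : ℝ, 1 < x →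
      a * x ^ k * Real.exp (-x) ≤ u₀ x ∧ u₀ x ≤ A * x ^ k * Real.exp (-x)

/-- `u` is the (bounded classical) solution of the Fisher-KPP equation
`∂ₜ u = ∂ₓₓ u + u(1-u)` on `(0,∞) × ℝ` with initial datum `u₀`; it satisfies `0 < u < 1`. -/
def SolvesKPP (u : ℝ → ℝ → ℝ) (u₀ : ℝ → ℝ) : Prop :=
  (∀ x : ℝ, u 0 x = u₀ x) ∧
  (∀ t x : ℝ, 0 < t →
    DifferentiableAt ℝ (fun y => u t y) x ∧
    DifferentiableAt ℝ (deriv (fun y => u t y)) x ∧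
    HasDerivAt (fun s => u s x)
      (deriv (deriv (fun y => u t y)) x + u t x * (1 - u t x)) t) ∧
  (∀ t x : ℝ, 0 < t → 0 < u t x ∧ u t x < 1)

/-- `U` is the minimal traveling wave: `U'' + 2U' + U(1-U) = 0`, `U(-∞) = 1`,
`U(+∞) = 0`, `U' < 0`, and `U(x) ∼ B x e^{-x}` as `x → +∞` for some `B > 0`. -/
def IsMinimalWave (U : ℝ → ℝ) : Prop :=
  (∀ z : ℝ, DifferentiableAt ℝ U z ∧ DifferentiableAt ℝ (deriv U) z) ∧
  (∀ z : ℝ, deriv (deriv U) z + 2 * deriv U z + U z * (1 - U z) = 0) ∧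
  Filter.Tendsto U Filter.atBot (nhds 1) ∧
  Filter.Tendsto U Filter.atTop (nhds 0) ∧
  (∀ z : ℝ, deriv U z < 0) ∧
  ∃ B : ℝ, 0 < B ∧
    Filter.Tendsto (fun z => U z / (z * Real.exp (-z))) Filter.atTop (nhds B)

lemma absMoment_integrable {b k : ℝ} (hb : 0 < b) (hk : 0 ≤ k) :
    Integrable fun s : ℝ => |s| ^ k * Real.exp (-b * s ^ 2) := by
  have hmain := integrableOn_rpow_mul_exp_neg_mul_sq hb (show (-1:ℝ) < k by linarith)
  rw [← integrableOn_univ, ← Iio_union_Ici (a := (0:ℝ)), integrableOn_union]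
  constructor
  · rw [← (Measure.measurePreserving_neg (volume : Measure ℝ)).integrableOn_comp_preimage
        (Homeomorph.neg ℝ).measurableEmbedding]
    simp only [Function.comp_def, abs_neg, neg_sq, neg_preimage, neg_Iio, neg_zero]
    exact hmain.congr_fun (fun x hx => by rw [abs_of_pos hx]) measurableSet_Ioi
  · rw [integrableOn_Ici_iff_integrableOn_Ioi]
    exact hmain.congr_fun (fun x hx => by rw [abs_of_pos hx]) measurableSet_Ioi

lemma rpow_sum_le {a b k : ℝ} (ha : 0 ≤ a) (hb : 0 ≤ b) (hk : 0 ≤ k) :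
    (a + b) ^ k ≤ 2 ^ k * (a ^ k + b ^ k) := by
  have hmax : 0 ≤ max a b := le_trans ha (le_max_left a b)
  have h1 : a + b ≤ 2 * max a b := by
    rcases le_total a b with h | h
    · rw [max_eq_right h]; linarith
    · rw [max_eq_left h]; linarith
  calc (a + b) ^ k ≤ (2 * max a b) ^ k := Real.rpow_le_rpow (by linarith) h1 hk
    _ = 2 ^ k * (max a b) ^ k := Real.mul_rpow (by norm_num) hmax
    _ ≤ 2 ^ k * (a ^ k + b ^ k) := by
        apply mul_le_mul_of_nonneg_left _ (Real.rpow_nonneg (by norm_num) k)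
        rcases le_total a b with h | h
        · rw [max_eq_right h]
          have := Real.rpow_nonneg ha k; linarith
        · rw [max_eq_left h]
          have := Real.rpow_nonneg hb k; linarith

lemma absMoment_scale {t : ℝ} (k : ℝ) (ht : 0 < t) :
    (∫ s : ℝ, |s| ^ k * Real.exp (-(4*t)⁻¹ * s ^ 2))
      = Real.sqrt t * (Real.sqrt t ^ k *
          ∫ u : ℝ, |u| ^ k * Real.exp (-(4:ℝ)⁻¹ * u ^ 2)) := by
  have hst : 0 < Real.sqrt t := Real.sqrt_pos.2 ht
  have key := MeasureTheory.Measure.integral_comp_mul_left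
    (fun s : ℝ => |s| ^ k * Real.exp (-(4*t)⁻¹ * s ^ 2)) (Real.sqrt t)
  have h1 : ∀ x : ℝ, |Real.sqrt t * x| ^ k * Real.exp (-(4*t)⁻¹ * (Real.sqrt t * x) ^ 2)
      = Real.sqrt t ^ k * (|x| ^ k * Real.exp (-(4:ℝ)⁻¹ * x ^ 2)) := by
    intro x
    have he : -(4*t)⁻¹ * (Real.sqrt t * x) ^ 2 = -(4:ℝ)⁻¹ * x ^ 2 := by
      rw [mul_pow, Real.sq_sqrt ht.le]
      field_simp
    rw [he, abs_mul, abs_of_pos hst, Real.mul_rpow hst.le (abs_nonneg x)]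
    ring
  simp only [h1, smul_eq_mul, abs_of_pos (inv_pos.2 hst)] at key
  rw [MeasureTheory.integral_const_mul] at key
  rw [eq_comm] at key
  rw [← key, ← mul_assoc, mul_inv_cancel₀ (ne_of_gt hst), one_mul]

/-- Lemma 3.2: estimate on the solution of the linearized equation `∂ₜv = ∂ₓₓv + v`
at the moving point `x = 2t + c√t`. -/
theorem linearized_moving_point_estimate
    (k : ℝ) (hk : 1 < k)
    (u₀ : ℝ → ℝ) (h₀ : KPPInitialData u₀ k)
    (v : ℝ → ℝ → ℝ)
    (hv : ∀ t x : ℝ, v t x =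
      Real.exp t * ∫ y : ℝ,
        (Real.sqrt (4 * Real.pi * t))⁻¹ * Real.exp (-(x - y) ^ 2 / (4 * t)) * u₀ y)
    (c t₀ : ℝ) (hc : 0 < c) (ht₀ : 0 < t₀) :
    ∃ c₀ : ℝ, 0 < c₀ ∧ ∀ t : ℝ, t₀ ≤ t →
      v t (2 * t + c * Real.sqrt t) ≤ c₀ * t ^ (k / 2) * Real.exp (-c * Real.sqrt t) := by
  obtain ⟨hUC, hpos, hlim, a, A, ha, haA, hbd⟩ := h₀
  have hk0 : (0:ℝ) ≤ k := by linarith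
  have hA0 : 0 < A := lt_of_lt_of_le ha haA
  set C1 : ℝ := max A (Real.exp 1) with hC1def
  have hC1 : 0 < C1 := lt_of_lt_of_le (Real.exp_pos 1) (le_max_right _ _)
  set Ik : ℝ := ∫ u : ℝ, |u| ^ k * Real.exp (-(4:ℝ)⁻¹ * u ^ 2) with hIkdef
  have hIknn : 0 ≤ Ik := integral_nonneg fun u => by positivity
  set D : ℝ := (c + (Real.sqrt t₀)⁻¹) ^ k with hDdef
  have hst₀ : 0 < Real.sqrt t₀ := Real.sqrt_pos.2 ht₀
  have hD : 0 < D := Real.rpow_pos_of_pos (by positivity) k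
  clear_value C1 Ik D
  have h2kpos : (0:ℝ) < 2 ^ k := Real.rpow_pos_of_pos two_pos k
  have hc₀pos : 0 < C1 * 2 ^ k * (D + (Real.sqrt (4 * Real.pi))⁻¹ * Ik) :=
    mul_pos (mul_pos hC1 h2kpos)
      (add_pos_of_pos_of_nonneg hD (mul_nonneg (inv_nonneg.2 (Real.sqrt_nonneg _)) hIknn))
  refine ⟨C1 * 2 ^ k * (D + (Real.sqrt (4 * Real.pi))⁻¹ * Ik), hc₀pos, ?_⟩
  intro t ht
  have ht0 : 0 < t := lt_of_lt_of_le ht₀ ht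
  have htne : t ≠ 0 := ne_of_gt ht0
  have hst : 0 < Real.sqrt t := Real.sqrt_pos.2 ht0
  set z : ℝ := c * Real.sqrt t with hz
  clear_value z
  have hznn : 0 ≤ z := by rw [hz]; positivity
  have hSpos : 0 < Real.sqrt (4 * Real.pi * t) := Real.sqrt_pos.2 (by positivity)
  -- Step 1: representation
  have hfun : ∀ y : ℝ,
      (Real.sqrt (4 * Real.pi * t))⁻¹ * Real.exp (-(2 * t + z - y) ^ 2 / (4 * t)) * u₀ y
      = Real.exp (-z - t) * ((Real.sqrt (4 * Real.pi * t))⁻¹ *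
          (Real.exp (-(4*t)⁻¹ * (y - z) ^ 2) * (Real.exp y * u₀ y))) := by
    intro y
    have harg : -(2 * t + z - y) ^ 2 / (4 * t)
        = (-z - t) + (-(4*t)⁻¹ * (y - z) ^ 2 + y) := by
      field_simp
      ring
    rw [harg, Real.exp_add, Real.exp_add]
    ring
  have hrep : v t (2 * t + z)
      = Real.exp (-z) * ∫ y : ℝ, (Real.sqrt (4 * Real.pi * t))⁻¹ *
          (Real.exp (-(4*t)⁻¹ * (y - z) ^ 2) * (Real.exp y * u₀ y)) := by
    rw [hv t (2 * t + z),
      MeasureTheory.integral_congr_ae (Filter.Eventually.of_forall hfun),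
      MeasureTheory.integral_const_mul, ← mul_assoc, ← Real.exp_add]
    congr 2
    ring
  -- Step 2: pointwise bound
  have hcore : ∀ y : ℝ, Real.exp y * u₀ y ≤ C1 * 2 ^ k * ((z + 1) ^ k + |y - z| ^ k) := by
    intro y
    have habsnn : (0:ℝ) ≤ |y - z| ^ k := Real.rpow_nonneg (abs_nonneg _) k
    rcases le_or_gt y 1 with hy | hy
    · have h2k : (1:ℝ) ≤ 2 ^ k := Real.one_le_rpow (by norm_num) hk0
      have hz1 : (1:ℝ) ≤ (z + 1) ^ k := Real.one_le_rpow (by linarith) hk0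
      have hmain : (1:ℝ) ≤ 2 ^ k * ((z + 1) ^ k + |y - z| ^ k) := by nlinarith
      calc Real.exp y * u₀ y ≤ Real.exp 1 * 1 :=
            mul_le_mul (Real.exp_le_exp.2 hy) (hpos y).2 (hpos y).1.le (Real.exp_pos 1).le
        _ = Real.exp 1 := mul_one _
        _ ≤ C1 := by rw [hC1def]; exact le_max_right _ _
        _ ≤ C1 * (2 ^ k * ((z + 1) ^ k + |y - z| ^ k)) :=
            le_mul_of_one_le_right hC1.le hmain
        _ = C1 * 2 ^ k * ((z + 1) ^ k + |y - z| ^ k) := by ring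
    · have hy0 : 0 < y := lt_trans one_pos hy
      have hub := (hbd y hy).2
      have hexp1 : Real.exp y * Real.exp (-y) = 1 := by
        rw [← Real.exp_add]; simp
      have hyle : y ≤ (z + 1) + |y - z| := by
        have := le_abs_self (y - z); linarith
      calc Real.exp y * u₀ y ≤ Real.exp y * (A * y ^ k * Real.exp (-y)) :=
            mul_le_mul_of_nonneg_left hub (Real.exp_pos y).le
        _ = A * y ^ k * (Real.exp y * Real.exp (-y)) := by ring
        _ = A * y ^ k := by rw [hexp1, mul_one]
        _ ≤ A * ((z + 1) + |y - z|) ^ k :=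
            mul_le_mul_of_nonneg_left (Real.rpow_le_rpow hy0.le hyle hk0) hA0.le
        _ ≤ A * (2 ^ k * ((z + 1) ^ k + |y - z| ^ k)) :=
            mul_le_mul_of_nonneg_left (rpow_sum_le (by linarith) (abs_nonneg _) hk0) hA0.le
        _ ≤ C1 * (2 ^ k * ((z + 1) ^ k + |y - z| ^ k)) := by
            have hAC : A ≤ C1 := by rw [hC1def]; exact le_max_left _ _
            have hnn : (0:ℝ) ≤ 2 ^ k * ((z + 1) ^ k + |y - z| ^ k) := by positivity
            exact mul_le_mul_of_nonneg_right hAC hnn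
        _ = C1 * 2 ^ k * ((z + 1) ^ k + |y - z| ^ k) := by ring
  have hbpos : 0 < (4*t)⁻¹ := by positivity
  have hint1 : Integrable (fun y : ℝ => Real.exp (-(4*t)⁻¹ * (y - z) ^ 2)) :=
    (integrable_exp_neg_mul_sq hbpos).comp_sub_right z
  have hint2 : Integrable (fun y : ℝ => |y - z| ^ k * Real.exp (-(4*t)⁻¹ * (y - z) ^ 2)) :=
    (absMoment_integrable hbpos hk0).comp_sub_right z
  set K1 : ℝ := (Real.sqrt (4 * Real.pi * t))⁻¹ * (C1 * 2 ^ k) * (z + 1) ^ k with hK1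
  set K2 : ℝ := (Real.sqrt (4 * Real.pi * t))⁻¹ * (C1 * 2 ^ k) with hK2
  clear_value K1 K2
  have hg : Integrable (fun y : ℝ => K1 * Real.exp (-(4*t)⁻¹ * (y - z) ^ 2)
      + K2 * (|y - z| ^ k * Real.exp (-(4*t)⁻¹ * (y - z) ^ 2))) :=
    (hint1.const_mul _).add (hint2.const_mul _)
  have hmono : (∫ y : ℝ, (Real.sqrt (4 * Real.pi * t))⁻¹ *
        (Real.exp (-(4*t)⁻¹ * (y - z) ^ 2) * (Real.exp y * u₀ y)))
      ≤ ∫ y : ℝ, (K1 * Real.exp (-(4*t)⁻¹ * (y - z) ^ 2)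
        + K2 * (|y - z| ^ k * Real.exp (-(4*t)⁻¹ * (y - z) ^ 2))) := by
    apply integral_mono_of_nonneg (Filter.Eventually.of_forall fun y => ?_) hg
      (Filter.Eventually.of_forall fun y => ?_)
    · have := (hpos y).1.le
      positivity
    · have h1 : 0 ≤ (Real.sqrt (4 * Real.pi * t))⁻¹ * Real.exp (-(4*t)⁻¹ * (y - z) ^ 2) := by
        positivity
      calc (Real.sqrt (4 * Real.pi * t))⁻¹ *
            (Real.exp (-(4*t)⁻¹ * (y - z) ^ 2) * (Real.exp y * u₀ y))
          = ((Real.sqrt (4 * Real.pi * t))⁻¹ * Real.exp (-(4*t)⁻¹ * (y - z) ^ 2)) *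
            (Real.exp y * u₀ y) := by ring
        _ ≤ ((Real.sqrt (4 * Real.pi * t))⁻¹ * Real.exp (-(4*t)⁻¹ * (y - z) ^ 2)) *
            (C1 * 2 ^ k * ((z + 1) ^ k + |y - z| ^ k)) :=
            mul_le_mul_of_nonneg_left (hcore y) h1
        _ = K1 * Real.exp (-(4*t)⁻¹ * (y - z) ^ 2)
            + K2 * (|y - z| ^ k * Real.exp (-(4*t)⁻¹ * (y - z) ^ 2)) := by
            rw [hK1, hK2]; ring
  -- compute the dominating integral
  have hgauss : (∫ y : ℝ, Real.exp (-(4*t)⁻¹ * (y - z) ^ 2)) = Real.sqrt (4 * Real.pi * t) := by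
    rw [integral_sub_right_eq_self (fun s : ℝ => Real.exp (-(4*t)⁻¹ * s ^ 2)) z,
      integral_gaussian]
    congr 1
    field_simp
  have hmom : (∫ y : ℝ, |y - z| ^ k * Real.exp (-(4*t)⁻¹ * (y - z) ^ 2))
      = Real.sqrt t * (Real.sqrt t ^ k * Ik) := by
    rw [integral_sub_right_eq_self (fun s : ℝ => |s| ^ k * Real.exp (-(4*t)⁻¹ * s ^ 2)) z]
    rw [hIkdef]
    exact absMoment_scale k ht0
  have hintg : (∫ y : ℝ, (K1 * Real.exp (-(4*t)⁻¹ * (y - z) ^ 2)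
        + K2 * (|y - z| ^ k * Real.exp (-(4*t)⁻¹ * (y - z) ^ 2))))
      = K1 * Real.sqrt (4 * Real.pi * t) + K2 * (Real.sqrt t * (Real.sqrt t ^ k * Ik)) := by
    rw [integral_add (hint1.const_mul _) (hint2.const_mul _),
      MeasureTheory.integral_const_mul, MeasureTheory.integral_const_mul, hgauss, hmom]
  -- simplifications
  have hsqrtsplit : Real.sqrt (4 * Real.pi * t) = Real.sqrt (4 * Real.pi) * Real.sqrt t :=
    Real.sqrt_mul (by positivity) t
  have hSmul : (Real.sqrt (4 * Real.pi * t))⁻¹ * Real.sqrt (4 * Real.pi * t) = 1 :=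
    inv_mul_cancel₀ (ne_of_gt hSpos)
  have hSsqrt : (Real.sqrt (4 * Real.pi * t))⁻¹ * Real.sqrt t = (Real.sqrt (4 * Real.pi))⁻¹ := by
    rw [hsqrtsplit, mul_inv]
    rw [mul_assoc, inv_mul_cancel₀ (ne_of_gt hst), mul_one]
  have hrpow : Real.sqrt t ^ k = t ^ (k / 2) := by
    rw [Real.sqrt_eq_rpow, ← Real.rpow_mul ht0.le]
    congr 1
    ring
  have hz1k : (z + 1) ^ k ≤ D * t ^ (k / 2) := by
    have hs : Real.sqrt t₀ ≤ Real.sqrt t := Real.sqrt_le_sqrt ht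
    have h1le : (1:ℝ) ≤ Real.sqrt t * (Real.sqrt t₀)⁻¹ := by
      rw [← div_eq_mul_inv, le_div_iff₀ hst₀]
      simpa using hs
    have hzz : z + 1 ≤ (c + (Real.sqrt t₀)⁻¹) * Real.sqrt t := by
      have h2 : (Real.sqrt t₀)⁻¹ * Real.sqrt t = Real.sqrt t * (Real.sqrt t₀)⁻¹ := by ring
      rw [hz]
      nlinarith
    calc (z + 1) ^ k ≤ ((c + (Real.sqrt t₀)⁻¹) * Real.sqrt t) ^ k :=
          Real.rpow_le_rpow (by linarith) hzz hk0
      _ = D * Real.sqrt t ^ k := by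
          rw [hDdef]; exact Real.mul_rpow (by positivity) (Real.sqrt_nonneg t)
      _ = D * t ^ (k / 2) := by rw [hrpow]
  -- final assembly
  have hfinal : K1 * Real.sqrt (4 * Real.pi * t) + K2 * (Real.sqrt t * (Real.sqrt t ^ k * Ik))
      ≤ C1 * 2 ^ k * (D + (Real.sqrt (4 * Real.pi))⁻¹ * Ik) * t ^ (k / 2) := by
    have e1 : K1 * Real.sqrt (4 * Real.pi * t) = C1 * 2 ^ k * (z + 1) ^ k := by
      rw [hK1, hK2]
      calc (Real.sqrt (4 * Real.pi * t))⁻¹ * (C1 * 2 ^ k) * (z + 1) ^ k *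
            Real.sqrt (4 * Real.pi * t)
          = ((Real.sqrt (4 * Real.pi * t))⁻¹ * Real.sqrt (4 * Real.pi * t)) *
            (C1 * 2 ^ k) * (z + 1) ^ k := by ring
        _ = C1 * 2 ^ k * (z + 1) ^ k := by rw [hSmul]; ring
    have e2 : K2 * (Real.sqrt t * (Real.sqrt t ^ k * Ik))
        = C1 * 2 ^ k * ((Real.sqrt (4 * Real.pi))⁻¹ * Ik) * t ^ (k / 2) := by
      rw [hK2]
      calc (Real.sqrt (4 * Real.pi * t))⁻¹ * (C1 * 2 ^ k) *
            (Real.sqrt t * (Real.sqrt t ^ k * Ik))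
          = ((Real.sqrt (4 * Real.pi * t))⁻¹ * Real.sqrt t) *
            (C1 * 2 ^ k) * Ik * Real.sqrt t ^ k := by ring
        _ = (Real.sqrt (4 * Real.pi))⁻¹ * (C1 * 2 ^ k) * Ik * t ^ (k / 2) := by
            rw [hSsqrt, hrpow]
        _ = C1 * 2 ^ k * ((Real.sqrt (4 * Real.pi))⁻¹ * Ik) * t ^ (k / 2) := by ring
    rw [e1, e2]
    have h3 : C1 * 2 ^ k * (z + 1) ^ k ≤ C1 * 2 ^ k * (D * t ^ (k / 2)) :=
      mul_le_mul_of_nonneg_left hz1k (mul_pos hC1 h2kpos).le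
    have h4 : C1 * 2 ^ k * (D + (Real.sqrt (4 * Real.pi))⁻¹ * Ik) * t ^ (k / 2)
        = C1 * 2 ^ k * (D * t ^ (k / 2))
          + C1 * 2 ^ k * ((Real.sqrt (4 * Real.pi))⁻¹ * Ik) * t ^ (k / 2) := by ring
    rw [h4]
    linarith
  have hexpz : 0 < Real.exp (-z) := Real.exp_pos _
  calc v t (2 * t + z)
      = Real.exp (-z) * ∫ y : ℝ, (Real.sqrt (4 * Real.pi * t))⁻¹ *
          (Real.exp (-(4*t)⁻¹ * (y - z) ^ 2) * (Real.exp y * u₀ y)) := hrep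
    _ ≤ Real.exp (-z) * (K1 * Real.sqrt (4 * Real.pi * t)
          + K2 * (Real.sqrt t * (Real.sqrt t ^ k * Ik))) := by
        rw [← hintg]
        exact mul_le_mul_of_nonneg_left hmono hexpz.le
    _ ≤ Real.exp (-z) * (C1 * 2 ^ k * (D + (Real.sqrt (4 * Real.pi))⁻¹ * Ik) * t ^ (k / 2)) :=
        mul_le_mul_of_nonneg_left hfinal hexpz.le
    _ = C1 * 2 ^ k * (D + (Real.sqrt (4 * Real.pi))⁻¹ * Ik) * t ^ (k / 2) *
          Real.exp (-c * Real.sqrt t) := by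
        rw [hz, neg_mul]
        ring
end
end

section
/- Let v(t,x) := (1/√(4πt)) ∫₀^∞ (e^{−(x−y)²/(4t)} − e^{−(x+y)²/(4t)}) v₀(y) dy for t > 0, x > 0, where v₀(x) = 1 for 0 < x ≤ 1 and v₀(x) = 1/x² for x > 1. Then for every ε > 0, sup over all t > 0 and x > 0 of the quantity e^{−x}·v(t,x)·(t+1)^{3/2 − ε} is finite. -/
open Real Filter MeasureTheory Set

/-!
The kernel `e^{-(x-y)²/4t} - e^{-(x+y)²/4t}` factors as `e^{-(x-y)²/4t} (1 - e^{-xy/t})`, so it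
lies in `[0, 1]` and is at most `xy/t`. Since `x e^{-x} ≤ 1`, this gives `e^{-x} · kernel ≤ min 1 (y/t) ≤ (y/t)^l` for
`0 ≤ l ≤ 1`. With `l = 1 - ε` the weight `y^l v₀(y)` is integrable on `(0, ∞)` (this is where the
`1/y²` tail of `v₀` enters), hence `e^{-x} v(t,x) ≲ t^{-1/2-l} = t^{-(3/2-ε)}`, which settles
large `t`; for small `t` the Gaussian normalisation gives `0 ≤ v ≤ 1`.
-/

noncomputable section

/-- The initial datum `v₀(x) = 1` for `0 < x ≤ 1`, `v₀(x) = 1/x²` for `x > 1`. -/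
def v₀ (x : ℝ) : ℝ := if x ≤ 1 then 1 else 1 / x ^ 2

/-- The solution of the Dirichlet heat equation on the half-line with initial datum `v₀`. -/
def vheat (t x : ℝ) : ℝ :=
  (Real.sqrt (4 * Real.pi * t))⁻¹ *
    ∫ y in Set.Ioi (0 : ℝ),
      (Real.exp (-(x - y) ^ 2 / (4 * t)) - Real.exp (-(x + y) ^ 2 / (4 * t))) * v₀ y

lemma v₀_nonneg (y : ℝ) : 0 ≤ v₀ y := by
  unfold v₀; split
  · exact zero_le_one
  · positivity

lemma v₀_le_one (y : ℝ) : v₀ y ≤ 1 := by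
  unfold v₀; split_ifs with h
  · exact le_rfl
  · rw [div_le_one (by nlinarith)]; nlinarith

lemma integrableOn_rpow_mul_v₀ {l : ℝ} (hl₀ : -1 < l) (hl₁ : l < 1) :
    IntegrableOn (fun y ↦ y ^ l * v₀ y) (Ioi 0) := by
  have near_zero : IntegrableOn (fun y ↦ y ^ l * v₀ y) (Ioc 0 1) := by
    refine IntegrableOn.congr_fun (intervalIntegral.intervalIntegrable_rpow' hl₀ (a := 0) (b := 1)).1
      (fun y hy ↦ ?_) measurableSet_Ioc
    simp [v₀, hy.2]
  have near_infinity : IntegrableOn (fun y ↦ y ^ l * v₀ y) (Ioi 1) := by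
    refine IntegrableOn.congr_fun ((integrableOn_Ioi_rpow_iff one_pos).2 (by linarith : l - 2 < -1))
      (fun y (hy : 1 < y) ↦ ?_) measurableSet_Ioi
    rw [v₀, if_neg hy.not_ge, rpow_sub (by linarith), rpow_two, div_eq_mul_one_div]
  simpa [Ioc_union_Ioi_eq_Ioi zero_le_one] using near_zero.union near_infinity

lemma exp_neg_sub_sq_div_eq (t x : ℝ) :
    (fun y ↦ exp (-(x - y) ^ 2 / (4 * t))) = fun y ↦ exp (-(4 * t)⁻¹ * (y - x) ^ 2) := by
  ext y; congr 1; ring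

lemma integrable_exp_neg_sub_sq_div {t : ℝ} (ht : 0 < t) (x : ℝ) :
    Integrable fun y ↦ exp (-(x - y) ^ 2 / (4 * t)) := by
  rw [exp_neg_sub_sq_div_eq]
  exact (integrable_exp_neg_mul_sq (by positivity)).comp_sub_right x

lemma integral_exp_neg_sub_sq_div (t x : ℝ) :
    ∫ y, exp (-(x - y) ^ 2 / (4 * t)) = √(4 * π * t) := by
  rw [exp_neg_sub_sq_div_eq, integral_sub_right_eq_self (fun y ↦ exp (-(4 * t)⁻¹ * y ^ 2)),
    integral_gaussian, div_inv_eq_mul]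
  ring_nf

def halfLineKernel (t x y : ℝ) : ℝ :=
  exp (-(x - y) ^ 2 / (4 * t)) - exp (-(x + y) ^ 2 / (4 * t))

lemma vheat_eq (t x : ℝ) :
    vheat t x = (√(4 * π * t))⁻¹ * ∫ y in Ioi 0, halfLineKernel t x y * v₀ y := rfl

lemma halfLineKernel_eq {t : ℝ} (ht : t ≠ 0) (x y : ℝ) :
    halfLineKernel t x y = exp (-(x - y) ^ 2 / (4 * t)) * (1 - exp (-(x * y / t))) := by
  rw [halfLineKernel, mul_sub, mul_one, ← exp_add]
  congr 2
  field_simp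
  ring

section HalfLineKernel

variable {t x y : ℝ}

lemma exp_neg_sub_sq_div_le_one (ht : 0 < t) : exp (-(x - y) ^ 2 / (4 * t)) ≤ 1 :=
  exp_le_one_iff.2 (by rw [neg_div]; exact neg_nonpos.2 (by positivity))

lemma one_sub_exp_neg_mul_div_nonneg (ht : 0 < t) (hxy : 0 ≤ x * y) :
    0 ≤ 1 - exp (-(x * y / t)) := by
  linarith [exp_le_one_iff.2 (neg_nonpos.2 (div_nonneg hxy ht.le))]

lemma halfLineKernel_nonneg (ht : 0 < t) (hxy : 0 ≤ x * y) : 0 ≤ halfLineKernel t x y := by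
  rw [halfLineKernel_eq ht.ne']
  exact mul_nonneg (exp_nonneg _) (one_sub_exp_neg_mul_div_nonneg ht hxy)

lemma halfLineKernel_le_exp (ht : 0 < t) :
    halfLineKernel t x y ≤ exp (-(x - y) ^ 2 / (4 * t)) := by
  rw [halfLineKernel_eq ht.ne']
  exact mul_le_of_le_one_right (exp_nonneg _) (by linarith [exp_nonneg (-(x * y / t))])

lemma halfLineKernel_le_one (ht : 0 < t) : halfLineKernel t x y ≤ 1 :=
  (halfLineKernel_le_exp ht).trans (exp_neg_sub_sq_div_le_one ht)

lemma halfLineKernel_le_mul_div (ht : 0 < t) (hxy : 0 ≤ x * y) :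
    halfLineKernel t x y ≤ x * y / t := by
  rw [halfLineKernel_eq ht.ne']
  refine (mul_le_of_le_one_left (one_sub_exp_neg_mul_div_nonneg ht hxy)
    (exp_neg_sub_sq_div_le_one ht)).trans ?_
  linarith [one_sub_le_exp_neg (x * y / t)]

lemma exp_neg_mul_halfLineKernel_le_rpow (ht : 0 < t) (hx : 0 ≤ x) (hy : 0 ≤ y) {l : ℝ}
    (hl₀ : 0 ≤ l) (hl₁ : l ≤ 1) : exp (-x) * halfLineKernel t x y ≤ (y / t) ^ l := by
  have hxy : 0 ≤ x * y := mul_nonneg hx hy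
  have le_one : exp (-x) * halfLineKernel t x y ≤ 1 :=
    mul_le_one₀ (exp_le_one_iff.2 (by linarith)) (halfLineKernel_nonneg ht hxy)
      (halfLineKernel_le_one ht)
  have le_div : exp (-x) * halfLineKernel t x y ≤ y / t :=
    calc exp (-x) * halfLineKernel t x y ≤ exp (-x) * (x * y / t) := by
          gcongr; exact halfLineKernel_le_mul_div ht hxy
      _ = x * exp (-x) * (y / t) := by ring
      _ ≤ 1 * (y / t) := by
          gcongr
          exact (mul_exp_neg_le_exp_neg_one x).trans (exp_le_one_iff.2 (by norm_num))
      _ = y / t := one_mul _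
  rcases le_total (y / t) 1 with h | h
  · exact le_div.trans (self_le_rpow_of_le_one (by positivity) h hl₁)
  · exact le_one.trans (one_le_rpow h hl₀)

variable {f : ℝ → ℝ}

lemma setIntegral_halfLineKernel_mul_nonneg (ht : 0 < t) (hx : 0 ≤ x)
    (hf₀ : ∀ y, 0 < y → 0 ≤ f y) : 0 ≤ ∫ y in Ioi 0, halfLineKernel t x y * f y :=
  setIntegral_nonneg measurableSet_Ioi fun y (hy : 0 < y) ↦
    mul_nonneg (halfLineKernel_nonneg ht (by positivity)) (hf₀ y hy)

lemma setIntegral_halfLineKernel_mul_le (ht : 0 < t) (hx : 0 ≤ x)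
    (hf₀ : ∀ y, 0 < y → 0 ≤ f y) (hf₁ : ∀ y, 0 < y → f y ≤ 1) :
    ∫ y in Ioi 0, halfLineKernel t x y * f y ≤ √(4 * π * t) := by
  calc ∫ y in Ioi 0, halfLineKernel t x y * f y
      ≤ ∫ y in Ioi 0, exp (-(x - y) ^ 2 / (4 * t)) := by
        refine integral_mono_of_nonneg ?_ (integrable_exp_neg_sub_sq_div ht x).integrableOn ?_
        all_goals filter_upwards [self_mem_ae_restrict measurableSet_Ioi] with y (hy : 0 < y)
        · exact mul_nonneg (halfLineKernel_nonneg ht (by positivity)) (hf₀ y hy)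
        · exact mul_le_of_le_one_right (halfLineKernel_nonneg ht (by positivity)) (hf₁ y hy)
            |>.trans (halfLineKernel_le_exp ht)
    _ ≤ ∫ y, exp (-(x - y) ^ 2 / (4 * t)) :=
        setIntegral_le_integral (integrable_exp_neg_sub_sq_div ht x)
          (Eventually.of_forall fun _ ↦ exp_nonneg _)
    _ = √(4 * π * t) := integral_exp_neg_sub_sq_div t x

lemma exp_neg_mul_setIntegral_halfLineKernel_mul_le (ht : 0 < t) (hx : 0 ≤ x) {l : ℝ}
    (hl₀ : 0 ≤ l) (hl₁ : l ≤ 1) (hf₀ : ∀ y, 0 < y → 0 ≤ f y)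
    (hf : IntegrableOn (fun y ↦ y ^ l * f y) (Ioi 0)) :
    exp (-x) * ∫ y in Ioi 0, halfLineKernel t x y * f y ≤
      t ^ (-l) * ∫ y in Ioi 0, y ^ l * f y := by
  rw [← integral_const_mul, ← integral_const_mul]
  refine integral_mono_of_nonneg ?_ (hf.const_mul _) ?_
  all_goals filter_upwards [self_mem_ae_restrict measurableSet_Ioi] with y (hy : 0 < y)
  · exact mul_nonneg (exp_nonneg _)
      (mul_nonneg (halfLineKernel_nonneg ht (by positivity)) (hf₀ y hy))
  · calc exp (-x) * (halfLineKernel t x y * f y) = exp (-x) * halfLineKernel t x y * f y := by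
          ring
      _ ≤ (y / t) ^ l * f y := by
          gcongr
          · exact hf₀ y hy
          · exact exp_neg_mul_halfLineKernel_le_rpow ht hx hy.le hl₀ hl₁
      _ = t ^ (-l) * (y ^ l * f y) := by
          rw [div_rpow hy.le ht.le, rpow_neg ht.le]; ring

end HalfLineKernel

section Vheat

variable {t x : ℝ}

lemma vheat_nonneg (ht : 0 < t) (hx : 0 ≤ x) : 0 ≤ vheat t x := by
  rw [vheat_eq]
  exact mul_nonneg (by positivity)
    (setIntegral_halfLineKernel_mul_nonneg ht hx fun y _ ↦ v₀_nonneg y)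

lemma vheat_le_one (ht : 0 < t) (hx : 0 ≤ x) : vheat t x ≤ 1 := by
  have hsqrt : 0 < √(4 * π * t) := by positivity
  calc vheat t x ≤ (√(4 * π * t))⁻¹ * √(4 * π * t) := by
        rw [vheat_eq]
        gcongr
        exact setIntegral_halfLineKernel_mul_le ht hx (fun y _ ↦ v₀_nonneg y) fun y _ ↦ v₀_le_one y
    _ = 1 := inv_mul_cancel₀ hsqrt.ne'

lemma exp_neg_mul_vheat_le_rpow (ht : 0 < t) (hx : 0 ≤ x) {l : ℝ} (hl₀ : 0 ≤ l) (hl₁ : l < 1) :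
    exp (-x) * vheat t x ≤ (∫ y in Ioi 0, y ^ l * v₀ y) * t ^ (-(l + 1 / 2)) := by
  have hC : 0 ≤ ∫ y in Ioi 0, y ^ l * v₀ y :=
    setIntegral_nonneg measurableSet_Ioi fun y (hy : 0 < y) ↦
      mul_nonneg (rpow_nonneg hy.le l) (v₀_nonneg y)
  have inv_sqrt_le : (√(4 * π * t))⁻¹ ≤ t ^ (-(1 / 2) : ℝ) := by
    rw [rpow_neg ht.le, ← sqrt_eq_rpow]
    gcongr
    nlinarith [pi_gt_three]
  calc exp (-x) * vheat t x
      = (√(4 * π * t))⁻¹ * (exp (-x) * ∫ y in Ioi 0, halfLineKernel t x y * v₀ y) := by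
        rw [vheat_eq]; ring
    _ ≤ t ^ (-(1 / 2) : ℝ) * (t ^ (-l) * ∫ y in Ioi 0, y ^ l * v₀ y) := by
        refine mul_le_mul inv_sqrt_le ?_ (mul_nonneg (exp_nonneg _)
          (setIntegral_halfLineKernel_mul_nonneg ht hx fun y _ ↦ v₀_nonneg y)) (by positivity)
        exact exp_neg_mul_setIntegral_halfLineKernel_mul_le ht hx hl₀ hl₁.le
          (fun y _ ↦ v₀_nonneg y) (integrableOn_rpow_mul_v₀ (by linarith) hl₁)
    _ = (∫ y in Ioi 0, y ^ l * v₀ y) * t ^ (-(l + 1 / 2)) := by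
        rw [neg_add, rpow_add ht]; ring

end Vheat

lemma mul_add_one_rpow_le_of_le_rpow_neg {u t p C : ℝ} (ht : 0 < t) (hp : 0 ≤ p) (hu₀ : 0 ≤ u)
    (hu₁ : u ≤ 1) (hu : u ≤ C * t ^ (-p)) : u * (t + 1) ^ p ≤ 2 ^ p * max 1 C := by
  rcases le_total t 1 with h | h
  · calc u * (t + 1) ^ p ≤ 1 * 2 ^ p := by gcongr; linarith
      _ ≤ 2 ^ p * max 1 C := by
          rw [one_mul]; exact le_mul_of_one_le_right (by positivity) (le_max_left _ _)
  · calc u * (t + 1) ^ p ≤ C * t ^ (-p) * (2 * t) ^ p := by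
          gcongr
          · exact hu₀.trans hu
          · linarith
      _ = 2 ^ p * C := by
          rw [mul_rpow zero_le_two ht.le, rpow_neg ht.le]
          field_simp [(rpow_pos_of_pos ht p).ne']
      _ ≤ 2 ^ p * max 1 C := by gcongr; exact le_max_right _ _

/-- Lemma 5.2: for every `ε > 0`, `e^{-x} v(t,x) (t+1)^{3/2-ε}` is bounded over
`t > 0`, `x > 0`. -/
theorem vheat_decay :
    ∀ ε : ℝ, 0 < ε →
      ∃ M : ℝ, ∀ t x : ℝ, 0 < t → 0 < x →
        Real.exp (-x) * vheat t x * (t + 1) ^ (3 / 2 - ε) ≤ M := by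
  intro ε hε
  set δ := min ε 1
  have hδ₀ : 0 < δ := lt_min hε one_pos
  have hδ₁ : δ ≤ 1 := min_le_right ε 1
  refine ⟨2 ^ (3 / 2 - δ) * max 1 (∫ y in Ioi 0, y ^ (1 - δ) * v₀ y), fun t x ht hx ↦ ?_⟩
  have decay := exp_neg_mul_vheat_le_rpow ht hx.le (l := 1 - δ) (by linarith) (by linarith)
  rw [show -(1 - δ + 1 / 2) = -(3 / 2 - δ) by ring] at decay
  have hv := vheat_nonneg ht hx.le
  calc exp (-x) * vheat t x * (t + 1) ^ (3 / 2 - ε)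
      ≤ exp (-x) * vheat t x * (t + 1) ^ (3 / 2 - δ) := by
        gcongr
        · linarith
        · exact min_le_left ε 1
    _ ≤ _ := mul_add_one_rpow_le_of_le_rpow_neg ht (by linarith) (by positivity)
        (mul_le_one₀ (exp_le_one_iff.2 (by linarith)) hv (vheat_le_one ht hx.le)) decay
end
end

section
/- Let v(t,x) := (1/√(4πt)) ∫₀^∞ (e^{−(x−y)²/(4t)} − e^{−(x+y)²/(4t)}) v₀(y) dy for t > 0, x > 0, where v₀(x) = 1 for 0 < x ≤ 1 and v₀(x) = 1/x² for x > 1. Then there exist t₀ > 0 and C > 0 such that ∂ₓv(t,x)/v(t,x) ≥ −C/t^{1/4} for all t > t₀ and all x > 0. -/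
/-!
Write `vheat = (4πt)^{-1/2} V` with `V(x) = ∫₀^∞ K(t,x,y) v₀(y) dy`. Since
`∂ₓK = y/(2t) (e^{-(x-y)²/4t} + e^{-(x+y)²/4t}) - x/(2t) K`, we have `V' ≥ -(x/2t) V`, which is
enough for `x ≤ t^{3/4}`. For `x ≥ t^{3/4}` use instead `∂ₓK ≥ -t^{-1/2} e^{-(x-y)²/8t}`: over
`y ≤ x/2` this Gaussian is `O(x e^{-x²/32t})`, over `y > x/2` the decay `v₀(y) ≤ 4/x²` gives
`O(√t/x²)`, while the window `y ∈ (x, x + √t]` gives `V ≥ √t/(12x²)`.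
-/

open Real Filter MeasureTheory Set

noncomputable section

/-- The half-line Dirichlet heat kernel, without its factor `(4πt)^{-1/2}`. -/
def halfLineHeatKernel (t x y : ℝ) : ℝ :=
  exp (-(x - y) ^ 2 / (4 * t)) - exp (-(x + y) ^ 2 / (4 * t))

def halfLineHeatKernelDeriv (t x y : ℝ) : ℝ :=
  -(x - y) / (2 * t) * exp (-(x - y) ^ 2 / (4 * t)) +
    (x + y) / (2 * t) * exp (-(x + y) ^ 2 / (4 * t))

lemma v₀_pos (y : ℝ) : 0 < v₀ y := by
  unfold v₀
  split_ifs with h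
  · exact one_pos
  · have : 0 < y := by linarith [not_le.mp h]
    positivity

lemma abs_v₀_le_one (y : ℝ) : |v₀ y| ≤ 1 := by
  rw [abs_of_pos (v₀_pos y)]
  exact v₀_le_one y

lemma v₀_le_one_div_sq {y : ℝ} (hy : 0 < y) : v₀ y ≤ 1 / y ^ 2 := by
  unfold v₀
  split_ifs with h
  · rw [le_div_iff₀ (by positivity)]
    nlinarith
  · exact le_rfl

lemma one_div_sq_le_v₀ {y a : ℝ} (hy : 0 < y) (hya : y ≤ a) (ha : 1 ≤ a) : 1 / a ^ 2 ≤ v₀ y := by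
  unfold v₀
  split_ifs with h
  · rw [div_le_one (by positivity)]
    nlinarith
  · gcongr

lemma measurable_v₀ : Measurable v₀ :=
  Measurable.ite (measurableSet_le measurable_id measurable_const)
    measurable_const (measurable_const.div (measurable_id.pow_const 2))

lemma integrable_exp_neg_sq_div {c : ℝ} (hc : 0 < c) :
    Integrable fun z : ℝ => exp (-z ^ 2 / c) := by
  simpa [neg_div, div_eq_inv_mul] using integrable_exp_neg_mul_sq (inv_pos.2 hc)

lemma integral_exp_neg_sq_div (c : ℝ) : ∫ z : ℝ, exp (-z ^ 2 / c) = √(π * c) := by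
  rw [mul_comm]
  simpa [neg_div, div_eq_inv_mul] using integral_gaussian c⁻¹

lemma halfLineHeatKernel_eq_mul (t x y : ℝ) :
    halfLineHeatKernel t x y = exp (-(x - y) ^ 2 / (4 * t)) * (1 - exp (-(x * y) / t)) := by
  rw [halfLineHeatKernel, mul_sub, mul_one, ← exp_add]
  rcases eq_or_ne t 0 with rfl | ht
  · simp
  · congr 2
    field_simp
    ring

lemma halfLineHeatKernel_pos {t x y : ℝ} (ht : 0 < t) (hx : 0 < x) (hy : 0 < y) :
    0 < halfLineHeatKernel t x y := by
  rw [halfLineHeatKernel, sub_pos, exp_lt_exp, div_lt_div_iff_of_pos_right (by positivity)]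
  nlinarith [mul_pos hx hy]

lemma hasDerivAt_halfLineHeatKernel (t x y : ℝ) :
    HasDerivAt (fun x => halfLineHeatKernel t x y) (halfLineHeatKernelDeriv t x y) x := by
  have hsub := ((((hasDerivAt_id x).sub_const y).pow 2).neg.div_const (4 * t)).exp
  have hadd := ((((hasDerivAt_id x).add_const y).pow 2).neg.div_const (4 * t)).exp
  refine (hsub.sub hadd).congr_deriv ?_
  simp only [halfLineHeatKernelDeriv, id, Pi.pow_apply, Pi.neg_apply]
  field_simp
  ring

/-- `|z| e^{-z²/8t} ≤ 2√t`, since `|z| ≤ 2√t (1 + z²/8t) ≤ 2√t e^{z²/8t}`. -/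
lemma abs_div_mul_exp_neg_sq_le {t : ℝ} (ht : 0 < t) (z : ℝ) :
    |z| / (2 * t) * exp (-z ^ 2 / (4 * t)) ≤ exp (-z ^ 2 / (8 * t)) / √t := by
  obtain ⟨s, hs, rfl⟩ : ∃ s, 0 < s ∧ t = s ^ 2 := ⟨√t, sqrt_pos.2 ht, (sq_sqrt ht.le).symm⟩
  rw [sqrt_sq hs.le]
  have hlin : |z| ≤ 2 * s * (z ^ 2 / (8 * s ^ 2) + 1) := by
    rw [mul_add, mul_one, ← sub_nonneg]
    have : 2 * s * (z ^ 2 / (8 * s ^ 2)) + 2 * s - |z| =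
        ((|z| - 2 * s) ^ 2 + 4 * s ^ 2) / (4 * s) := by
      field_simp
      rw [← sq_abs z]
      ring
    rw [this]
    positivity
  have hkey : |z| * exp (-z ^ 2 / (8 * s ^ 2)) ≤ 2 * s := by
    rw [neg_div, exp_neg, ← div_eq_mul_inv, div_le_iff₀ (exp_pos _)]
    exact hlin.trans (by gcongr; linarith [add_one_le_exp (z ^ 2 / (8 * s ^ 2))])
  have hsplit : exp (-z ^ 2 / (4 * s ^ 2)) =
      exp (-z ^ 2 / (8 * s ^ 2)) * exp (-z ^ 2 / (8 * s ^ 2)) := by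
    rw [← exp_add]
    ring_nf
  calc |z| / (2 * s ^ 2) * exp (-z ^ 2 / (4 * s ^ 2))
      = |z| * exp (-z ^ 2 / (8 * s ^ 2)) * exp (-z ^ 2 / (8 * s ^ 2)) / (2 * s ^ 2) := by
        rw [hsplit]
        ring
    _ ≤ 2 * s * exp (-z ^ 2 / (8 * s ^ 2)) / (2 * s ^ 2) := by gcongr
    _ = exp (-z ^ 2 / (8 * s ^ 2)) / s := by
        field_simp

lemma exp_neg_sq_div_le_of_abs_sub_le {t a b : ℝ} (ht : 0 < t) (h : |a - b| ≤ 1) :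
    exp (-a ^ 2 / (8 * t)) ≤ exp (1 / (8 * t)) * exp (-b ^ 2 / (16 * t)) := by
  rw [← exp_add, exp_le_exp, div_add_div _ _ (by positivity) (by positivity),
    div_le_div_iff₀ (by positivity) (by positivity)]
  have hab : (a - b) ^ 2 ≤ 1 := by nlinarith [sq_abs (a - b), abs_nonneg (a - b)]
  have hb : b ^ 2 ≤ 2 * a ^ 2 + 2 := by nlinarith [sq_nonneg (a + (a - b))]
  nlinarith [mul_pos ht ht]

lemma abs_halfLineHeatKernelDeriv_le {t : ℝ} (ht : 0 < t) (x y : ℝ) :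
    |halfLineHeatKernelDeriv t x y| ≤
      (exp (-(x - y) ^ 2 / (8 * t)) + exp (-(x + y) ^ 2 / (8 * t))) / √t := by
  have habs (z : ℝ) : |z / (2 * t) * exp (-z ^ 2 / (4 * t))| ≤ exp (-z ^ 2 / (8 * t)) / √t := by
    rw [abs_mul, abs_div, abs_of_pos (by positivity : 0 < 2 * t), abs_of_pos (exp_pos _)]
    exact abs_div_mul_exp_neg_sq_le ht z
  have hsub : |-(x - y) / (2 * t) * exp (-(x - y) ^ 2 / (4 * t))| ≤
      exp (-(x - y) ^ 2 / (8 * t)) / √t := by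
    rw [neg_div, neg_mul, abs_neg]
    exact habs (x - y)
  rw [add_div]
  exact (abs_add_le _ _).trans (add_le_add hsub (habs (x + y)))

lemma neg_div_mul_halfLineHeatKernel_le {t x y : ℝ} (ht : 0 ≤ t) (hy : 0 ≤ y) :
    -(x / (2 * t)) * halfLineHeatKernel t x y ≤ halfLineHeatKernelDeriv t x y := by
  have hsplit : halfLineHeatKernelDeriv t x y =
      y / (2 * t) * (exp (-(x - y) ^ 2 / (4 * t)) + exp (-(x + y) ^ 2 / (4 * t))) -
        x / (2 * t) * halfLineHeatKernel t x y := by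
    rw [halfLineHeatKernelDeriv, halfLineHeatKernel]
    ring
  rw [hsplit]
  have : 0 ≤ y / (2 * t) * (exp (-(x - y) ^ 2 / (4 * t)) + exp (-(x + y) ^ 2 / (4 * t))) := by
    positivity
  linarith

lemma neg_exp_div_sqrt_le_halfLineHeatKernelDeriv {t x y : ℝ} (ht : 0 < t) (hxy : 0 ≤ x + y) :
    -(exp (-(x - y) ^ 2 / (8 * t)) / √t) ≤ halfLineHeatKernelDeriv t x y := by
  have hsub : (x - y) / (2 * t) * exp (-(x - y) ^ 2 / (4 * t)) ≤
      |x - y| / (2 * t) * exp (-(x - y) ^ 2 / (4 * t)) := by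
    gcongr
    exact le_abs_self _
  have hadd : 0 ≤ (x + y) / (2 * t) * exp (-(x + y) ^ 2 / (4 * t)) := by positivity
  have hbound := abs_div_mul_exp_neg_sq_le ht (x - y)
  have hsplit : halfLineHeatKernelDeriv t x y =
      -((x - y) / (2 * t) * exp (-(x - y) ^ 2 / (4 * t))) +
        (x + y) / (2 * t) * exp (-(x + y) ^ 2 / (4 * t)) := by
    rw [halfLineHeatKernelDeriv]
    ring
  rw [hsplit]
  linarith

section BoundedWeight

variable {g : ℝ → ℝ} {M t : ℝ}

lemma integrable_exp_neg_sq_div_mul (hg : Measurable g) (hgM : ∀ y, |g y| ≤ M) {c : ℝ}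
    (hc : 0 < c) (x : ℝ) : Integrable fun y => exp (-(x - y) ^ 2 / c) * g y :=
  ((integrable_exp_neg_sq_div hc).comp_sub_left x).mul_bdd hg.aestronglyMeasurable
    (ae_of_all _ hgM)

lemma integrable_halfLineHeatKernel_mul (hg : Measurable g) (hgM : ∀ y, |g y| ≤ M)
    (ht : 0 < t) (x : ℝ) : Integrable fun y => halfLineHeatKernel t x y * g y := by
  have hc : 0 < 4 * t := by positivity
  exact (((integrable_exp_neg_sq_div hc).comp_sub_left x).sub
    ((integrable_exp_neg_sq_div hc).comp_add_left x)).mul_bdd hg.aestronglyMeasurable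
    (ae_of_all _ hgM)

lemma integrable_halfLineHeatKernelDeriv_mul (hg : Measurable g) (hgM : ∀ y, |g y| ≤ M)
    (ht : 0 < t) (x : ℝ) : Integrable fun y => halfLineHeatKernelDeriv t x y * g y := by
  have hc : 0 < 8 * t := by positivity
  have hbound : Integrable fun y =>
      (exp (-(x - y) ^ 2 / (8 * t)) + exp (-(x + y) ^ 2 / (8 * t))) / √t :=
    (((integrable_exp_neg_sq_div hc).comp_sub_left x).add
      ((integrable_exp_neg_sq_div hc).comp_add_left x)).div_const _
  refine (hbound.mono' ?_ (ae_of_all _ fun y => abs_halfLineHeatKernelDeriv_le ht x y)).mul_bdd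
    hg.aestronglyMeasurable (ae_of_all _ hgM)
  exact (Continuous.aestronglyMeasurable (by unfold halfLineHeatKernelDeriv; fun_prop))

/-- Differentiation under the integral sign, dominated on `|x' - x| < 1` by Gaussians of
variance `8t` centred at `±x`. -/
lemma hasDerivAt_integral_halfLineHeatKernel_mul (hg : Measurable g) (hgM : ∀ y, |g y| ≤ M)
    (ht : 0 < t) (s : Set ℝ) (x : ℝ) :
    HasDerivAt (fun x => ∫ y in s, halfLineHeatKernel t x y * g y)
      (∫ y in s, halfLineHeatKernelDeriv t x y * g y) x := by
  have hc : 0 < 16 * t := by positivity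
  set bound : ℝ → ℝ := fun y => M * (exp (1 / (8 * t)) / √t) *
    (exp (-(x - y) ^ 2 / (16 * t)) + exp (-(x + y) ^ 2 / (16 * t)))
  have hbound_int : Integrable bound :=
    (((integrable_exp_neg_sq_div hc).comp_sub_left x).add
      ((integrable_exp_neg_sq_div hc).comp_add_left x)).const_mul _
  have hle (x' y : ℝ) (hx' : x' ∈ Metric.ball x 1) :
      ‖halfLineHeatKernelDeriv t x' y * g y‖ ≤ bound y := by
    have hdist : |x' - x| ≤ 1 := (Metric.mem_ball.1 hx').le
    have hsub := exp_neg_sq_div_le_of_abs_sub_le (a := x' - y) (b := x - y) ht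
      (by rwa [sub_sub_sub_cancel_right])
    have hadd := exp_neg_sq_div_le_of_abs_sub_le (a := x' + y) (b := x + y) ht
      (by rwa [add_sub_add_right_eq_sub])
    have hM : 0 ≤ M := (abs_nonneg _).trans (hgM y)
    rw [norm_mul, Real.norm_eq_abs, Real.norm_eq_abs, mul_comm]
    calc |g y| * |halfLineHeatKernelDeriv t x' y|
        ≤ M * ((exp (-(x' - y) ^ 2 / (8 * t)) + exp (-(x' + y) ^ 2 / (8 * t))) / √t) :=
          mul_le_mul (hgM y) (abs_halfLineHeatKernelDeriv_le ht x' y) (abs_nonneg _) hM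
      _ ≤ bound y := by
          simp only [bound]
          rw [mul_assoc, div_mul_eq_mul_div, mul_add]
          gcongr
  exact (hasDerivAt_integral_of_dominated_loc_of_deriv_le (Metric.ball_mem_nhds x one_pos)
    (Eventually.of_forall fun x' =>
      (integrable_halfLineHeatKernel_mul hg hgM ht x').aestronglyMeasurable.restrict)
    (integrable_halfLineHeatKernel_mul hg hgM ht x).integrableOn
    (integrable_halfLineHeatKernelDeriv_mul hg hgM ht x).aestronglyMeasurable.restrict
    (ae_of_all _ fun y x' hx' => hle x' y hx') hbound_int.integrableOn
    (ae_of_all _ fun y x' _ => (hasDerivAt_halfLineHeatKernel t x' y).mul_const (g y))).2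

lemma integral_halfLineHeatKernel_mul_pos (hg : Measurable g) (hgM : ∀ y, |g y| ≤ M)
    (hg0 : ∀ y, 0 < g y) (ht : 0 < t) {x : ℝ} (hx : 0 < x) :
    0 < ∫ y in Ioi 0, halfLineHeatKernel t x y * g y := by
  have hpos : ∀ y ∈ Ioi (0 : ℝ), 0 < halfLineHeatKernel t x y * g y := fun y hy =>
    mul_pos (halfLineHeatKernel_pos ht hx hy) (hg0 y)
  rw [setIntegral_pos_iff_support_of_nonneg_ae
    ((ae_restrict_iff' measurableSet_Ioi).2 (ae_of_all _ fun y hy => (hpos y hy).le))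
    (integrable_halfLineHeatKernel_mul hg hgM ht x).integrableOn,
    inter_eq_right.2 fun y hy => Function.mem_support.2 (hpos y hy).ne', Real.volume_Ioi]
  exact ENNReal.zero_lt_top

lemma neg_div_mul_integral_le_integral_deriv (hg : Measurable g) (hgM : ∀ y, |g y| ≤ M)
    (hg0 : ∀ y, 0 ≤ g y) (ht : 0 < t) (x : ℝ) :
    -(x / (2 * t)) * ∫ y in Ioi 0, halfLineHeatKernel t x y * g y ≤
      ∫ y in Ioi 0, halfLineHeatKernelDeriv t x y * g y := by
  rw [← integral_const_mul]
  refine setIntegral_mono_on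
    ((integrable_halfLineHeatKernel_mul hg hgM ht x).const_mul _).integrableOn
    (integrable_halfLineHeatKernelDeriv_mul hg hgM ht x).integrableOn measurableSet_Ioi
    fun y hy => ?_
  rw [← mul_assoc]
  exact mul_le_mul_of_nonneg_right (neg_div_mul_halfLineHeatKernel_le ht.le (le_of_lt hy)) (hg0 y)

lemma neg_integral_div_sqrt_le_integral_deriv (hg : Measurable g) (hgM : ∀ y, |g y| ≤ M)
    (hg0 : ∀ y, 0 ≤ g y) (ht : 0 < t) {x : ℝ} (hx : 0 ≤ x) :
    -((∫ y in Ioi 0, exp (-(x - y) ^ 2 / (8 * t)) * g y) / √t) ≤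
      ∫ y in Ioi 0, halfLineHeatKernelDeriv t x y * g y := by
  rw [← integral_div, ← integral_neg]
  refine setIntegral_mono_on
    ((integrable_exp_neg_sq_div_mul hg hgM (by positivity) x).div_const _).neg.integrableOn
    (integrable_halfLineHeatKernelDeriv_mul hg hgM ht x).integrableOn measurableSet_Ioi
    fun y hy => ?_
  rw [mul_div_right_comm, ← neg_mul]
  exact mul_le_mul_of_nonneg_right
    (neg_exp_div_sqrt_le_halfLineHeatKernelDeriv ht (by linarith [mem_Ioi.1 hy])) (hg0 y)

end BoundedWeight

lemma setIntegral_Ioc_exp_neg_sq_div_mul_v₀_le {t x : ℝ} (ht : 0 < t) (hx : 0 ≤ x) :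
    ∫ y in Ioc 0 (x / 2), exp (-(x - y) ^ 2 / (8 * t)) * v₀ y ≤
      x / 2 * exp (-x ^ 2 / (32 * t)) := by
  have hnear : ∀ y ∈ Ioc 0 (x / 2),
      ‖exp (-(x - y) ^ 2 / (8 * t)) * v₀ y‖ ≤ exp (-x ^ 2 / (32 * t)) := by
    rintro y ⟨hy0, hyx⟩
    rw [norm_mul, Real.norm_of_nonneg (exp_pos _).le, Real.norm_of_nonneg (v₀_pos y).le]
    calc exp (-(x - y) ^ 2 / (8 * t)) * v₀ y ≤ exp (-(x - y) ^ 2 / (8 * t)) * 1 := by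
          gcongr
          exact v₀_le_one y
      _ ≤ exp (-x ^ 2 / (32 * t)) := by
          have hsq : x ^ 2 / 4 ≤ (x - y) ^ 2 := by nlinarith
          rw [mul_one, exp_le_exp, div_le_div_iff₀ (by positivity) (by positivity)]
          nlinarith [mul_le_mul_of_nonneg_right hsq ht.le]
  have := norm_setIntegral_le_of_norm_le_const (μ := volume) measure_Ioc_lt_top hnear
  rw [Real.volume_real_Ioc_of_le (by positivity), sub_zero] at this
  exact (Real.le_norm_self _).trans (this.trans_eq (mul_comm _ _))

lemma setIntegral_Ioi_exp_neg_sq_div_mul_v₀_le {t x : ℝ} (ht : 0 < t) (hx : 0 < x) :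
    ∫ y in Ioi (x / 2), exp (-(x - y) ^ 2 / (8 * t)) * v₀ y ≤ 24 * √t / x ^ 2 := by
  have h8t : 0 < 8 * t := by positivity
  have hgauss := (integrable_exp_neg_sq_div h8t).comp_sub_left x
  have hfar : ∀ y ∈ Ioi (x / 2),
      exp (-(x - y) ^ 2 / (8 * t)) * v₀ y ≤ 4 / x ^ 2 * exp (-(x - y) ^ 2 / (8 * t)) := by
    intro y hy
    have hy0 : 0 < y := lt_trans (by positivity) hy
    rw [mul_comm]
    refine mul_le_mul_of_nonneg_right ((v₀_le_one_div_sq hy0).trans ?_) (exp_pos _).le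
    rw [div_le_div_iff₀ (by positivity) (by positivity)]
    nlinarith [mem_Ioi.1 hy]
  have hsqrt : √(π * (8 * t)) ≤ 6 * √t := by
    rw [show 6 * √t = √(6 ^ 2 * t) by rw [sqrt_mul (by positivity), sqrt_sq (by norm_num)]]
    exact sqrt_le_sqrt (by nlinarith [pi_le_four])
  calc ∫ y in Ioi (x / 2), exp (-(x - y) ^ 2 / (8 * t)) * v₀ y
      ≤ ∫ y in Ioi (x / 2), 4 / x ^ 2 * exp (-(x - y) ^ 2 / (8 * t)) :=
        setIntegral_mono_on
          (integrable_exp_neg_sq_div_mul measurable_v₀ abs_v₀_le_one h8t x).integrableOn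
          (hgauss.const_mul _).integrableOn measurableSet_Ioi hfar
    _ ≤ 4 / x ^ 2 * ∫ y, exp (-(x - y) ^ 2 / (8 * t)) := by
        rw [integral_const_mul]
        exact mul_le_mul_of_nonneg_left
          (setIntegral_le_integral hgauss (ae_of_all _ fun _ => (exp_pos _).le)) (by positivity)
    _ = 4 / x ^ 2 * √(π * (8 * t)) := by
        rw [integral_sub_left_eq_self (fun z => exp (-z ^ 2 / (8 * t))) volume x,
          integral_exp_neg_sq_div]
    _ ≤ 4 / x ^ 2 * (6 * √t) := by gcongr
    _ = 24 * √t / x ^ 2 := by ring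

lemma integral_exp_neg_sq_div_mul_v₀_le {t x : ℝ} (ht : 0 < t) (hx : 0 < x) :
    ∫ y in Ioi 0, exp (-(x - y) ^ 2 / (8 * t)) * v₀ y ≤
      x / 2 * exp (-x ^ 2 / (32 * t)) + 24 * √t / x ^ 2 := by
  have hint := integrable_exp_neg_sq_div_mul measurable_v₀ abs_v₀_le_one
    (by positivity : 0 < 8 * t) x
  rw [← Ioc_union_Ioi_eq_Ioi (by positivity : (0 : ℝ) ≤ x / 2),
    setIntegral_union (Ioc_disjoint_Ioi le_rfl) measurableSet_Ioi hint.integrableOn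
      hint.integrableOn]
  exact add_le_add (setIntegral_Ioc_exp_neg_sq_div_mul_v₀_le ht hx.le)
    (setIntegral_Ioi_exp_neg_sq_div_mul_v₀_le ht hx)

/-- Each factor of `K = e^{-(x-y)²/4t} (1 - e^{-xy/t})` and `v₀(y) ≥ 1/(2x)²` is bounded below
for `y ∈ (x, x + √t]`. -/
lemma one_div_le_halfLineHeatKernel_mul_v₀ {t x y : ℝ} (ht : 0 < t) (hxt : √t ≤ x)
    (hx : 1 ≤ 2 * x) (hy : y ∈ Ioc x (x + √t)) :
    1 / (12 * x ^ 2) ≤ halfLineHeatKernel t x y * v₀ y := by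
  obtain ⟨hxy, hyx⟩ := hy
  have hx0 : 0 < x := by linarith
  have hsq : (x - y) ^ 2 ≤ t := by nlinarith [sq_sqrt ht.le, sqrt_nonneg t]
  have hgauss : 3 / 4 ≤ exp (-(x - y) ^ 2 / (4 * t)) := by
    refine le_trans ?_ (add_one_le_exp _)
    rw [neg_div, ← sub_eq_neg_add, le_sub_comm, div_le_iff₀ (by positivity)]
    linarith
  have hfactor : 1 / 2 ≤ 1 - exp (-(x * y) / t) := by
    have hxy_t : t ≤ x * y := by nlinarith [sq_sqrt ht.le, sqrt_nonneg t]
    have hexp : exp (-(x * y) / t) ≤ exp (-1) :=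
      exp_le_exp.2 (by rw [div_le_iff₀ ht]; linarith)
    have he : exp (-1) ≤ 1 / 2 := by
      rw [exp_neg, inv_le_comm₀ (exp_pos _) (by norm_num)]
      linarith [add_one_le_exp 1]
    linarith
  have hv : 1 / (2 * x) ^ 2 ≤ v₀ y := one_div_sq_le_v₀ (hx0.trans hxy) (by linarith) hx
  rw [halfLineHeatKernel_eq_mul]
  calc 1 / (12 * x ^ 2) ≤ 3 / 4 * (1 / 2) * (1 / (2 * x) ^ 2) := by
        rw [div_le_iff₀ (by positivity)]
        field_simp
        norm_num
    _ ≤ _ := by gcongr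

lemma sqrt_div_le_integral_halfLineHeatKernel_mul_v₀ {t x : ℝ} (ht : 0 < t) (hxt : √t ≤ x)
    (hx : 1 ≤ 2 * x) :
    √t / (12 * x ^ 2) ≤ ∫ y in Ioi 0, halfLineHeatKernel t x y * v₀ y := by
  have hx0 : 0 < x := by linarith
  have hint := integrable_halfLineHeatKernel_mul measurable_v₀ abs_v₀_le_one ht x
  have hsub : Ioc x (x + √t) ⊆ Ioi 0 := fun y hy => hx0.trans hy.1
  calc √t / (12 * x ^ 2) ≤ ∫ y in Ioc x (x + √t), halfLineHeatKernel t x y * v₀ y := by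
        have := setIntegral_ge_of_const_le measurableSet_Ioc (by simp)
          (fun y hy => one_div_le_halfLineHeatKernel_mul_v₀ ht hxt hx hy)
          (hint.integrableOn.mono_set hsub)
        rwa [Real.volume_real_Ioc_of_le (by linarith [sqrt_nonneg t]), add_sub_cancel_left,
          smul_eq_mul, ← mul_div_assoc, mul_one] at this
    _ ≤ ∫ y in Ioi 0, halfLineHeatKernel t x y * v₀ y :=
        setIntegral_mono_set hint.integrableOn
          ((ae_restrict_iff' measurableSet_Ioi).2 (ae_of_all _ fun y hy =>
            (mul_pos (halfLineHeatKernel_pos ht hx0 hy) (v₀_pos y)).le))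
          hsub.eventuallyLE

lemma exp_neg_le_six_div_pow_three {u : ℝ} (hu : 0 < u) : exp (-u) ≤ 6 / u ^ 3 := by
  have h := pow_div_factorial_le_exp u hu.le 3
  norm_num [Nat.factorial] at h
  rw [exp_neg, ← inv_div]
  exact inv_anti₀ (by positivity) h

lemma pow_three_mul_exp_neg_sq_div_le {q x : ℝ} (hq : 0 < q) (hx : q ^ 3 ≤ x) :
    x ^ 3 * exp (-x ^ 2 / (32 * q ^ 4)) ≤ 6 * 32 ^ 3 * q ^ 3 := by
  have hx0 : 0 < x := lt_of_lt_of_le (by positivity) hx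
  calc x ^ 3 * exp (-x ^ 2 / (32 * q ^ 4))
      ≤ x ^ 3 * (6 / (x ^ 2 / (32 * q ^ 4)) ^ 3) := by
        rw [neg_div]
        gcongr
        exact exp_neg_le_six_div_pow_three (by positivity)
    _ = 6 * 32 ^ 3 * q ^ 3 * ((q ^ 3) ^ 3 / x ^ 3) := by
        field_simp
    _ ≤ 6 * 32 ^ 3 * q ^ 3 := by
        refine mul_le_of_le_one_right (by positivity) ?_
        rw [div_le_one (by positivity)]
        gcongr

lemma neg_div_mul_integral_le_integral_deriv_of_pow_three_le {q x : ℝ} (hq : 1 ≤ q)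
    (hx : q ^ 3 ≤ x) :
    -(2 ^ 21 / q) * ∫ y in Ioi 0, halfLineHeatKernel (q ^ 4) x y * v₀ y ≤
      ∫ y in Ioi 0, halfLineHeatKernelDeriv (q ^ 4) x y * v₀ y := by
  have hq0 : 0 < q := by linarith
  have hq3 : 1 ≤ q ^ 3 := one_le_pow₀ hq
  have hx0 : 0 < x := by linarith
  have ht : 0 < q ^ 4 := by positivity
  have hsqrt : √(q ^ 4) = q ^ 2 := by
    rw [show q ^ 4 = (q ^ 2) ^ 2 by ring, sqrt_sq (by positivity)]
  have hderiv := neg_integral_div_sqrt_le_integral_deriv measurable_v₀ abs_v₀_le_one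
    (fun y => (v₀_pos y).le) ht hx0.le
  have hW := integral_exp_neg_sq_div_mul_v₀_le ht hx0
  have hV := sqrt_div_le_integral_halfLineHeatKernel_mul_v₀ (x := x) ht
    (by rw [hsqrt]; nlinarith) (by linarith)
  have htail := pow_three_mul_exp_neg_sq_div_le hq0 hx
  rw [hsqrt] at hderiv hW hV
  set E := exp (-x ^ 2 / (32 * q ^ 4))
  have hsum : x / 2 * E + 24 * q ^ 2 / x ^ 2 ≤ 2 ^ 21 * q ^ 3 / (12 * x ^ 2) := by
    have hexpand : (x / 2 * E + 24 * q ^ 2 / x ^ 2) * (12 * x ^ 2) =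
        6 * (x ^ 3 * E) + 288 * q ^ 2 := by
      field_simp
      ring
    rw [le_div_iff₀ (by positivity), hexpand]
    nlinarith
  rw [neg_mul]
  refine le_trans (neg_le_neg ?_) hderiv
  calc (∫ y in Ioi 0, exp (-(x - y) ^ 2 / (8 * q ^ 4)) * v₀ y) / q ^ 2
      ≤ (2 ^ 21 * q ^ 3 / (12 * x ^ 2)) / q ^ 2 := by gcongr; exact hW.trans hsum
    _ = 2 ^ 21 / q * (q ^ 2 / (12 * x ^ 2)) := by
        field_simp
    _ ≤ 2 ^ 21 / q * ∫ y in Ioi 0, halfLineHeatKernel (q ^ 4) x y * v₀ y := by gcongr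

lemma vheat_eq_mul_integral (t x : ℝ) :
    vheat t x = (√(4 * π * t))⁻¹ * ∫ y in Ioi 0, halfLineHeatKernel t x y * v₀ y :=
  rfl

lemma hasDerivAt_vheat {t : ℝ} (ht : 0 < t) (x : ℝ) :
    HasDerivAt (fun y => vheat t y)
      ((√(4 * π * t))⁻¹ * ∫ y in Ioi 0, halfLineHeatKernelDeriv t x y * v₀ y) x :=
  (hasDerivAt_integral_halfLineHeatKernel_mul measurable_v₀ abs_v₀_le_one ht _ x).const_mul _

/-- Lemma 5.3: logarithmic-derivative lower bound for `v`. -/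
theorem vheat_log_deriv_bound :
    ∃ t₀ C : ℝ, 0 < t₀ ∧ 0 < C ∧
      ∀ t x : ℝ, t₀ < t → 0 < x →
        -(C / t ^ ((1 : ℝ) / 4)) ≤ deriv (fun y => vheat t y) x / vheat t x := by
  refine ⟨1, 2 ^ 21, one_pos, by positivity, fun t x ht hx => ?_⟩
  obtain ⟨q, hq, rfl⟩ : ∃ q : ℝ, 1 < q ∧ q ^ 4 = t :=
    ⟨t ^ ((1 : ℝ) / 4), one_lt_rpow ht (by norm_num), by
      rw [← rpow_natCast, ← rpow_mul (by linarith)]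
      norm_num⟩
  have hq4 : (q ^ 4) ^ ((1 : ℝ) / 4) = q := by
    rw [← rpow_natCast, ← rpow_mul (by linarith)]
    norm_num
  have ht : 0 < q ^ 4 := by positivity
  have hV := integral_halfLineHeatKernel_mul_pos measurable_v₀ abs_v₀_le_one v₀_pos ht hx
  rw [hq4, (hasDerivAt_vheat ht x).deriv, vheat_eq_mul_integral,
    mul_div_mul_left _ _ (by positivity), le_div_iff₀ hV]
  rcases le_total x (q ^ 3) with hxq | hxq
  · have hcoef : -(2 ^ 21 / q) ≤ -(x / (2 * q ^ 4)) := by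
      rw [neg_le_neg_iff, div_le_div_iff₀ (by positivity) (by positivity)]
      nlinarith [mul_le_mul_of_nonneg_right hxq (by positivity : (0 : ℝ) ≤ q)]
    exact (mul_le_mul_of_nonneg_right hcoef hV.le).trans
      (neg_div_mul_integral_le_integral_deriv measurable_v₀ abs_v₀_le_one
        (fun y => (v₀_pos y).le) ht x)
  · exact neg_div_mul_integral_le_integral_deriv_of_pow_three_le hq.le hxq
end
end

section
/- Let r, r' ∈ ℝ, let w be the solution of the Cauchy problem w'' + (y/2)·w' + (r − 1/2)·w = 0 on (0,∞) with w(0) = 0, w'(0) = 1, define ψ(t,z) := e^{−z}·t^{1/2 + r' − r}·w(z/√t), and set ũ(t,x) := ψ(t, x − 2t + r'·ln t). Then for all t > 0 and all x with z := x − 2t + r'·ln t ≥ 0, one has the exact identity ∂ₜũ(t,x) − ∂ₓₓũ(t,x) − ũ(t,x) = (r'·e^{−z}/t^{1 + r − r'})·w'(z/√t). -/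
/-!
With `z = x - 2t + r' log t` and `y = z / √t`, the chain and product rules give
`∂ₜũ - ∂ₓₓũ - ũ = (e^{-z} t^{1/2 + r' - r} / t) ((1/2 - r) w - (y/2) w' - w'' + r' w' / √t)`,
all evaluated at `y`; the `r' w' / √t` term is the contribution of the `r' log t` shift.
The ODE kills the rest, also at `y = 0`, where `w''(0)` is the right limit of `-(y/2) w' - (r - 1/2) w`.
-/

open Real Filter

open scoped Topology

noncomputable section

theorem deriv_eq_of_tendsto_deriv_nhdsGT {E : Type*} [NormedAddCommGroup E] [NormedSpace ℝ E]
    {f : ℝ → E} {a : ℝ} {e : E} (hf : Differentiable ℝ f)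
    (h : Tendsto (deriv f) (𝓝[>] a) (𝓝 e)) : deriv f a = e := by
  have hRight : HasDerivWithinAt f e (Set.Ici a) a :=
    hasDerivWithinAt_Ici_of_tendsto_deriv hf.differentiableOn hf.continuous.continuousWithinAt
      univ_mem h
  exact (uniqueDiffOn_Ici a a Set.self_mem_Ici).eq_deriv _
    (hf a).hasDerivAt.hasDerivWithinAt hRight

theorem SolvesLinODE.deriv_deriv_eq {w : ℝ → ℝ} {r : ℝ} (hw : SolvesLinODE w r) {y : ℝ}
    (hy : 0 ≤ y) : deriv (deriv w) y = -(y / 2) * deriv w y - (r - 1 / 2) * w y := by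
  obtain ⟨hdiff, hode, hw0, hw'0⟩ := hw
  rcases hy.lt_or_eq with hy | rfl
  · linarith [hode y hy]
  set g : ℝ → ℝ := fun y => -(y / 2) * deriv w y - (r - 1 / 2) * w y
  have hg : Continuous g := by
    have : Continuous w := continuous_iff_continuousAt.2 fun y => (hdiff y).1.continuousAt
    have : Continuous (deriv w) :=
      continuous_iff_continuousAt.2 fun y => (hdiff y).2.continuousAt
    fun_prop
  refine deriv_eq_of_tendsto_deriv_nhdsGT (fun y => (hdiff y).2) ?_
  refine (hg.tendsto 0).mono_left nhdsWithin_le_nhds |>.congr' ?_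
  filter_upwards [self_mem_nhdsWithin] with y hy
  simp only [g]
  linarith [hode y hy]

theorem hasDerivAt_exp_neg_mul_comp_div {v : ℝ → ℝ} {s z : ℝ}
    (hv : DifferentiableAt ℝ v (z / s)) :
    HasDerivAt (fun z => exp (-z) * v (z / s))
      (exp (-z) * (deriv v (z / s) / s - v (z / s))) z := by
  refine ((hasDerivAt_neg z).exp.mul
    (hv.hasDerivAt.comp z ((hasDerivAt_id z).div_const s))).congr_deriv ?_
  simp only [Function.comp_apply, id]
  ring

theorem deriv_deriv_exp_neg_mul_comp_div {v : ℝ → ℝ} (hv : Differentiable ℝ v)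
    (hv' : Differentiable ℝ (deriv v)) (s z : ℝ) :
    deriv (deriv fun z => exp (-z) * v (z / s)) z =
      exp (-z) * (deriv (deriv v) (z / s) / s ^ 2 - 2 * deriv v (z / s) / s + v (z / s)) := by
  have hderiv : deriv (fun z => exp (-z) * v (z / s)) =
      fun z => exp (-z) * deriv v (z / s) / s - exp (-z) * v (z / s) := by
    funext z
    rw [(hasDerivAt_exp_neg_mul_comp_div (hv _)).deriv]
    ring
  rw [hderiv]
  refine (((hasDerivAt_exp_neg_mul_comp_div (hv' _)).div_const s).sub
    (hasDerivAt_exp_neg_mul_comp_div (hv _))).deriv.trans ?_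
  ring

theorem deriv_deriv_const_mul_comp_add_const {𝕜 : Type*} [NontriviallyNormedField 𝕜]
    (f : 𝕜 → 𝕜) (C c x : 𝕜) :
    deriv (deriv fun y => C * f (y + c)) x = C * deriv (deriv f) (x + c) := by
  simp only [deriv_const_mul_field', deriv_comp_add_const]

theorem hasDerivAt_exp_neg_mul_rpow_mul_comp_div_sqrt {g w : ℝ → ℝ} {g' a t : ℝ}
    (hg : HasDerivAt g g' t) (ht : 0 < t) (hw : DifferentiableAt ℝ w (g t / √t)) :
    HasDerivAt (fun σ => exp (-g σ) * σ ^ a * w (g σ / √σ))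
      (exp (-g t) * t ^ a * ((a / t - g') * w (g t / √t)
        + (g' / √t - g t / (2 * t * √t)) * deriv w (g t / √t))) t := by
  have hs : √t ≠ 0 := (sqrt_pos.2 ht).ne'
  refine ((hg.neg.exp.mul (hasDerivAt_rpow_const (p := a) (Or.inl ht.ne'))).mul
    (hw.hasDerivAt.comp t (hg.div (hasDerivAt_sqrt ht.ne') hs))).congr_deriv ?_
  simp only [Function.comp_apply, Pi.mul_apply, Pi.div_apply, Pi.neg_apply,
    rpow_sub_one ht.ne']
  field_simp
  rw [sq_sqrt ht.le, pow_succ, sq_sqrt ht.le]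
  ring

/-- Exact identity for the ansatz `ũ(t,x) = ψ(t, x - 2t + r' ln t)`, where
`ψ(t,z) = e^{-z} t^{1/2 + r' - r} w(z/√t)`. -/
theorem ansatz_identity
    (r r' : ℝ) (w : ℝ → ℝ) (hw : SolvesLinODE w r)
    (ψ : ℝ → ℝ → ℝ)
    (hψ : ∀ t z : ℝ, ψ t z =
      Real.exp (-z) * t ^ (1 / 2 + r' - r) * w (z / Real.sqrt t))
    (util : ℝ → ℝ → ℝ)
    (hutil : ∀ t x : ℝ, util t x = ψ t (x - 2 * t + r' * Real.log t)) :
    ∀ t : ℝ, 0 < t → ∀ x : ℝ, 0 ≤ x - 2 * t + r' * Real.log t →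
      deriv (fun s => util s x) t - deriv (deriv (fun y => util t y)) x - util t x
        = r' * Real.exp (-(x - 2 * t + r' * Real.log t)) / t ^ (1 + r - r')
            * deriv w ((x - 2 * t + r' * Real.log t) / Real.sqrt t) := by
  intro t ht x hz
  have hshift : HasDerivAt (fun σ => x - 2 * σ + r' * log σ) (-2 + r' / t) t := by
    refine ((((hasDerivAt_id t).const_mul 2).const_sub x).add
      ((hasDerivAt_log ht.ne').const_mul r')).congr_deriv ?_
    simp [div_eq_mul_inv]
  have htime : (fun σ => util σ x) = fun σ =>
      exp (-(x - 2 * σ + r' * log σ)) * σ ^ (1 / 2 + r' - r)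
        * w ((x - 2 * σ + r' * log σ) / √σ) :=
    funext fun σ => by rw [hutil, hψ]
  have hspace : (fun y => util t y) = fun y =>
      t ^ (1 / 2 + r' - r) * (fun z => exp (-z) * w (z / √t)) (y + (r' * log t - 2 * t)) :=
    funext fun y => by
      rw [hutil, hψ, show y - 2 * t + r' * log t = y + (r' * log t - 2 * t) by ring]
      ring
  rw [htime, (hasDerivAt_exp_neg_mul_rpow_mul_comp_div_sqrt hshift ht (hw.1 _).1).deriv, hspace,
    deriv_deriv_const_mul_comp_add_const (fun z => exp (-z) * w (z / √t)),
    deriv_deriv_exp_neg_mul_comp_div (fun y => (hw.1 y).1) (fun y => (hw.1 y).2),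
    show x + (r' * log t - 2 * t) = x - 2 * t + r' * log t by ring,
    hw.deriv_deriv_eq (div_nonneg hz (sqrt_nonneg t)), hutil, hψ]
  have hpow : t ^ (1 + r - r') = t * √t / t ^ (1 / 2 + r' - r) := by
    rw [eq_div_iff (rpow_pos_of_pos ht _).ne', ← rpow_add ht, sqrt_eq_rpow,
      show 1 + r - r' + (1 / 2 + r' - r) = 1 + 1 / 2 by ring, rpow_add ht, rpow_one]
  rw [hpow, sq_sqrt ht.le]
  have hs : √t ≠ 0 := (sqrt_pos.2 ht).ne'
  field_simp
  ring
end
end
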